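/- arXiv:1203.3786 — 9 statements merged into one kernel-verified Lean document; each statement's English description precedes it below -/
import Mathlib

section
/- For n ≥ 1, the number of 2-colored set partitions of [n] avoiding both 1^1 2^1 and 1^2 2^1 in the pattern sense equals 2^n + n − 1. -/
/-- `i` and `j` lie in the same block of the set partition `P`. -/
def SameBlock {n : ℕ} (P : Finpartition (Finset.univ : Finset (Fin n))) (i j : Fin n) : Prop :=
  ∃ b ∈ P.parts, i ∈ b ∧ j ∈ b

/-- A `k`-colored set partition of `[n]`: a set partition of `Fin n` together with a
color from `Fin k` for each element. -/
structure CPart (n k : ℕ) where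
  part : Finpartition (Finset.univ : Finset (Fin n))
  col : Fin n → Fin k

/-- Contains the pattern 1^1 1^1 : two elements of the same block with equal colors. -/
def Has11 {n k : ℕ} (σ : CPart n k) : Prop :=
  ∃ i j : Fin n, i < j ∧ SameBlock σ.part i j ∧ σ.col i = σ.col j

/-- Contains the pattern 1^1 1^2 : same block, smaller element has strictly smaller color. -/
def Has112 {n k : ℕ} (σ : CPart n k) : Prop :=
  ∃ i j : Fin n, i < j ∧ SameBlock σ.part i j ∧ σ.col i < σ.col j

/-- Contains the pattern 1^2 1^1 : same block, smaller element has strictly larger color. -/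
def Has121 {n k : ℕ} (σ : CPart n k) : Prop :=
  ∃ i j : Fin n, i < j ∧ SameBlock σ.part i j ∧ σ.col j < σ.col i

/-- Contains the pattern 1^1 2^1 : different blocks, equal colors. -/
def Has1121 {n k : ℕ} (σ : CPart n k) : Prop :=
  ∃ i j : Fin n, i < j ∧ ¬ SameBlock σ.part i j ∧ σ.col i = σ.col j

/-- Contains the pattern 1^1 2^2 : different blocks, smaller element has strictly smaller color. -/
def Has1122 {n k : ℕ} (σ : CPart n k) : Prop :=
  ∃ i j : Fin n, i < j ∧ ¬ SameBlock σ.part i j ∧ σ.col i < σ.col j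

/-- Contains the pattern 1^2 2^1 : different blocks, smaller element has strictly larger color. -/
def Has1221 {n k : ℕ} (σ : CPart n k) : Prop :=
  ∃ i j : Fin n, i < j ∧ ¬ SameBlock σ.part i j ∧ σ.col j < σ.col i

/-- The Bell number: the number of set partitions of an `m`-element set. -/
noncomputable def bell (m : ℕ) : ℕ := Nat.card (Finpartition (Finset.univ : Finset (Fin m)))

namespace Aux

variable {n : ℕ}

lemma sb_refl (P : Finpartition (Finset.univ : Finset (Fin n))) (i : Fin n) :
    SameBlock P i i :=
  ⟨P.part i, P.part_mem.2 (Finset.mem_univ i), P.mem_part (Finset.mem_univ i),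
    P.mem_part (Finset.mem_univ i)⟩

lemma sb_symm {P : Finpartition (Finset.univ : Finset (Fin n))} {i j : Fin n}
    (h : SameBlock P i j) : SameBlock P j i := by
  obtain ⟨b, hb, hi, hj⟩ := h; exact ⟨b, hb, hj, hi⟩

lemma sb_trans {P : Finpartition (Finset.univ : Finset (Fin n))} {i j k : Fin n}
    (h : SameBlock P i j) (h' : SameBlock P j k) : SameBlock P i k := by
  obtain ⟨b, hb, hi, hj⟩ := h
  obtain ⟨b', hb', hj', hk⟩ := h'
  exact ⟨b, hb, hi, (P.eq_of_mem_parts hb' hb hj' hj) ▸ hk⟩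

/-- The lower block. -/
def LS (n t : ℕ) : Finset (Fin n) := Finset.univ.filter (fun i => i.val ≤ t)

/-- The upper block. -/
def US (n t : ℕ) : Finset (Fin n) := Finset.univ.filter (fun i => t < i.val)

lemma mem_LS {t : ℕ} {i : Fin n} : i ∈ LS n t ↔ i.val ≤ t := by simp [LS]

lemma mem_US {t : ℕ} {i : Fin n} : i ∈ US n t ↔ t < i.val := by simp [US]

lemma LS_ne_US (t : ℕ) (hn : 0 < n) : LS n t ≠ US n t := by
  intro h
  have h0 : (⟨0, hn⟩ : Fin n) ∈ LS n t := mem_LS.2 (Nat.zero_le t)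
  rw [h] at h0
  exact Nat.not_lt_zero t (mem_US.1 h0)

/-- The two-block interval split partition. -/
def split (n t : ℕ) (ht : t + 1 < n) : Finpartition (Finset.univ : Finset (Fin n)) where
  parts := {LS n t, US n t}
  supIndep := by
    rw [Finset.supIndep_pair (LS_ne_US t (by omega))]
    rw [Finset.disjoint_left]
    intro i hi hi'
    exact absurd (mem_US.1 hi') (by simp [mem_LS.1 hi])
  sup_parts := by
    rw [Finset.sup_insert, Finset.sup_singleton]
    ext i
    simp only [id, Finset.sup_eq_union, Finset.mem_union, mem_LS, mem_US, Finset.mem_univ, iff_true]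
    exact le_or_gt i.val t
  bot_notMem := by
    intro h
    rcases Finset.mem_insert.1 h with h | h
    · have : (⟨0, by omega⟩ : Fin n) ∈ LS n t := mem_LS.2 (Nat.zero_le t)
      rw [← h] at this; exact absurd this (Finset.notMem_empty _)
    · have : (⟨t + 1, ht⟩ : Fin n) ∈ US n t := mem_US.2 (Nat.lt_succ_self t)
      rw [← Finset.mem_singleton.1 h] at this; exact absurd this (Finset.notMem_empty _)

lemma split_parts (t : ℕ) (ht : t + 1 < n) : (split n t ht).parts = {LS n t, US n t} := rfl

lemma sb_split {t : ℕ} (ht : t + 1 < n) {i j : Fin n} :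
    SameBlock (split n t ht) i j ↔ (i.val ≤ t ↔ j.val ≤ t) := by
  constructor
  · rintro ⟨b, hb, hi, hj⟩
    rcases Finset.mem_insert.1 hb with rfl | hb
    · simp [mem_LS.1 hi, mem_LS.1 hj]
    · rw [Finset.mem_singleton] at hb; subst hb
      have h1 := mem_US.1 hi; have h2 := mem_US.1 hj; omega
  · intro h
    by_cases hi : i.val ≤ t
    · exact ⟨LS n t, Finset.mem_insert_self _ _, mem_LS.2 hi, mem_LS.2 (h.1 hi)⟩
    · refine ⟨US n t, Finset.mem_insert.2 (Or.inr (Finset.mem_singleton_self _)),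
        mem_US.2 (by omega), mem_US.2 ?_⟩
      have := mt h.2 hi; omega

/-- The split colored partition. -/
def mkSplit (n t : ℕ) (ht : t + 1 < n) : CPart n 2 :=
  ⟨split n t ht, fun i => if i.val ≤ t then 0 else 1⟩

/-- The map realizing the bijection. -/
def Fmap (n : ℕ) (hn : 1 ≤ n) : ((Fin n → Fin 2) ⊕ Fin (n - 1)) → CPart n 2
  | .inl c => ⟨Finpartition.indiscrete (by
      simp only [ne_eq, Finset.bot_eq_empty, ← Finset.nonempty_iff_ne_empty]
      exact ⟨⟨0, hn⟩, Finset.mem_univ _⟩), c⟩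
  | .inr t => mkSplit n t.val (by omega)

lemma sb_indiscrete (hn : 1 ≤ n) (c : Fin n → Fin 2) (i j : Fin n) :
    SameBlock (Fmap n hn (Sum.inl c)).part i j := by
  exact ⟨Finset.univ, by simp [Fmap], Finset.mem_univ i, Finset.mem_univ j⟩

lemma avoid (hn : 1 ≤ n) (x : (Fin n → Fin 2) ⊕ Fin (n - 1)) :
    ¬ Has1121 (Fmap n hn x) ∧ ¬ Has1221 (Fmap n hn x) := by
  cases x with
  | inl c =>
    constructor <;>
    · rintro ⟨i, j, hij, hnsb, -⟩
      exact hnsb (sb_indiscrete hn c i j)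
  | inr t =>
    have ht : t.val + 1 < n := by omega
    constructor
    · rintro ⟨i, j, hij, hnsb, hc⟩
      have hnsb' : ¬ (i.val ≤ t.val ↔ j.val ≤ t.val) := fun h => hnsb ((sb_split ht).2 h)
      have hijv : i.val < j.val := hij
      have hi : i.val ≤ t.val := by omega
      have hj : ¬ j.val ≤ t.val := by omega
      simp only [Fmap, mkSplit, if_pos hi, if_neg hj] at hc
      exact absurd hc (by decide)
    · rintro ⟨i, j, hij, hnsb, hc⟩
      have hnsb' : ¬ (i.val ≤ t.val ↔ j.val ≤ t.val) := fun h => hnsb ((sb_split ht).2 h)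
      have hijv : i.val < j.val := hij
      have hi : i.val ≤ t.val := by omega
      have hj : ¬ j.val ≤ t.val := by omega
      simp only [Fmap, mkSplit, if_pos hi, if_neg hj] at hc
      exact absurd hc (by decide)

lemma Fmap_inl_ne_inr (hn : 1 ≤ n) (c : Fin n → Fin 2) (t : Fin (n - 1)) :
    Fmap n hn (Sum.inl c) ≠ Fmap n hn (Sum.inr t) := by
  intro h
  have ht : t.val + 1 < n := by omega
  have hpart := congrArg (fun σ : CPart n 2 => σ.part.parts) h
  simp only [Fmap, mkSplit, Finpartition.indiscrete_parts, split_parts] at hpart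
  have huniv : (Finset.univ : Finset (Fin n)) ∈
      ({LS n t.val, US n t.val} : Finset (Finset (Fin n))) := by
    rw [← hpart]; exact Finset.mem_singleton_self _
  rcases Finset.mem_insert.1 huniv with h' | h'
  · have hx : (⟨t.val + 1, ht⟩ : Fin n) ∈ LS n t.val := h' ▸ Finset.mem_univ _
    have : t.val + 1 ≤ t.val := mem_LS.1 hx
    omega
  · rw [Finset.mem_singleton] at h'
    have hx : (⟨0, by omega⟩ : Fin n) ∈ US n t.val := h' ▸ Finset.mem_univ _
    have : t.val < 0 := mem_US.1 hx
    omega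

lemma Fmap_inj (hn : 1 ≤ n) : Function.Injective (Fmap n hn) := by
  intro x y hxy
  match x, y with
  | .inl c, .inl c' =>
    have := congrArg CPart.col hxy
    simp only [Fmap] at this
    exact congrArg Sum.inl this
  | .inl c, .inr t => exact absurd hxy (Fmap_inl_ne_inr hn c t)
  | .inr t, .inl c => exact absurd hxy.symm (Fmap_inl_ne_inr hn c t)
  | .inr t, .inr t' =>
    have hcol := congrArg CPart.col hxy
    simp only [Fmap, mkSplit] at hcol
    have htt : t.val = t'.val := by
      by_contra hne
      rcases Nat.lt_or_ge t.val t'.val with hlt | hge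
      · have := congrFun hcol ⟨t'.val, by omega⟩
        rw [if_neg (show ¬ (t'.val ≤ t.val) by omega), if_pos (le_refl t'.val)] at this
        exact absurd this (by decide)
      · have hlt : t'.val < t.val := by omega
        have := congrFun hcol ⟨t.val, by omega⟩
        rw [if_pos (le_refl t.val), if_neg (show ¬ (t.val ≤ t'.val) by omega)] at this
        exact absurd this (by decide)
    exact congrArg Sum.inr (Fin.ext htt)

lemma surj (hn : 1 ≤ n) (σ : CPart n 2) (h1 : ¬ Has1121 σ) (h2 : ¬ Has1221 σ) :
    ∃ x, Fmap n hn x = σ := by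
  classical
  obtain ⟨P, c⟩ := σ
  simp only [Has1121, Has1221] at h1 h2
  have cross : ∀ i j : Fin n, i < j → ¬ SameBlock P i j → c i = 0 ∧ c j = 1 := by
    intro i j hij hnsb
    have hne : c i ≠ c j := fun h => h1 ⟨i, j, hij, hnsb, h⟩
    have hnlt : ¬ c j < c i := fun h => h2 ⟨i, j, hij, hnsb, h⟩
    have hlt : c i < c j := lt_of_le_of_ne (le_of_not_gt hnlt) hne
    omega
  by_cases hall : ∀ i j : Fin n, SameBlock P i j
  · refine ⟨Sum.inl c, ?_⟩
    have blockuniv : ∀ b ∈ P.parts, b = Finset.univ := by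
      intro b hb
      obtain ⟨x, hx⟩ := P.nonempty_of_mem_parts hb
      ext y
      simp only [Finset.mem_univ, iff_true]
      obtain ⟨b', hb', hx', hy⟩ := hall x y
      rwa [P.eq_of_mem_parts hb hb' hx hx']
    have key : P.parts = {Finset.univ} := by
      ext b
      rw [Finset.mem_singleton]
      constructor
      · exact blockuniv b
      · rintro rfl
        have hm := P.part_mem.2 (Finset.mem_univ (⟨0, hn⟩ : Fin n))
        rwa [blockuniv _ hm] at hm
    have hP : (Fmap n hn (Sum.inl c)).part = P := by
      apply Finpartition.ext
      simp only [Fmap, Finpartition.indiscrete_parts, key]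
    show Fmap n hn (Sum.inl c) = ⟨P, c⟩
    have hc : (Fmap n hn (Sum.inl c)).col = c := rfl
    calc Fmap n hn (Sum.inl c) = ⟨(Fmap n hn (Sum.inl c)).part, (Fmap n hn (Sum.inl c)).col⟩ := rfl
      _ = ⟨P, c⟩ := by rw [hP, hc]
  · push_neg at hall
    obtain ⟨i0, j0, hnsb0⟩ := hall
    have hex : ∃ i j : Fin n, i < j ∧ ¬ SameBlock P i j := by
      rcases lt_trichotomy i0 j0 with h | h | h
      · exact ⟨i0, j0, h, hnsb0⟩
      · exact absurd (h ▸ sb_refl P i0) hnsb0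
      · exact ⟨j0, i0, h, fun hs => hnsb0 (sb_symm hs)⟩
    clear hnsb0
    obtain ⟨i0, j0, hij0, hnsb0⟩ := hex
    obtain ⟨hci0, hcj0⟩ := cross i0 j0 hij0 hnsb0
    have ext_elem : ∀ a b : Fin n, SameBlock P a b →
        ∃ z : Fin n, ¬ SameBlock P a z := by
      intro a b _
      by_cases h : SameBlock P a i0
      · exact ⟨j0, fun hs => hnsb0 (sb_trans (sb_symm h) hs)⟩
      · exact ⟨i0, h⟩
    have mono : ∀ a b : Fin n, a < b → c a ≤ c b := by
      intro a b hab
      by_cases hsb : SameBlock P a b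
      · obtain ⟨z, hz⟩ := ext_elem a b hsb
        have hzb : ¬ SameBlock P b z := fun hs => hz (sb_trans hsb hs)
        rcases lt_trichotomy z a with h | h | h
        · have h1' := (cross z a h (fun hs => hz (sb_symm hs))).2
          have h2' := (cross z b (lt_trans h hab) (fun hs => hzb (sb_symm hs))).2
          omega
        · subst h; exact absurd (sb_refl P z) hz
        · rcases lt_trichotomy z b with h' | h' | h'
          · have h1' := (cross a z h hz).1
            omega
          · subst h'; exact absurd (sb_refl P z) hzb
          · have h1' := (cross a z h hz).1
            omega
      · have := cross a b hab hsb
        omega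
    set T := Finset.univ.filter (fun a : Fin n => c a = 0) with hT
    have hTne : T.Nonempty := ⟨i0, by simp [hT, hci0]⟩
    set t : Fin n := T.max' hTne with htdef
    have htc : c t = 0 := by
      have := T.max'_mem hTne
      simpa [hT] using this
    have hiff : ∀ a : Fin n, c a = 0 ↔ a ≤ t := by
      intro a
      constructor
      · intro h
        exact T.le_max' a (by simp [hT, h])
      · intro h
        rcases eq_or_lt_of_le h with h' | h'
        · rw [h']; exact htc
        · have := mono a t h'
          omega
    have htj0 : t < j0 := by
      by_contra h
      have : j0 ≤ t := le_of_not_gt h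
      have := (hiff j0).2 this
      omega
    have htn : t.val + 1 < n := by
      have h1' : t.val < j0.val := htj0
      have h2' : j0.val < n := j0.isLt
      omega
    have sameside : ∀ a b : Fin n, SameBlock P a b → a ≤ t → b ≤ t := by
      intro a b hsb hat
      by_contra hbt
      have htb : t < b := lt_of_not_ge hbt
      have hab : a < b := lt_of_le_of_lt hat htb
      have hca : c a = 0 := (hiff a).2 hat
      have hcb : c b = 1 := by
        have h' : c b ≠ 0 := fun h => hbt ((hiff b).1 h)
        omega
      obtain ⟨z, hz⟩ := ext_elem a b hsb
      have hzb : ¬ SameBlock P b z := fun hs => hz (sb_trans hsb hs)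
      rcases lt_trichotomy z a with h | h | h
      · have := (cross z a h (fun hs => hz (sb_symm hs))).2
        omega
      · subst h; exact hz (sb_refl P z)
      · rcases lt_trichotomy z b with h' | h' | h'
        · have hz1 := (cross a z h hz).2
          have hz0 := (cross z b h' (fun hs => hzb (sb_symm hs))).1
          omega
        · subst h'; exact hzb (sb_refl P z)
        · have := (cross b z h' hzb).1
          omega
    have hiff2 : ∀ a b : Fin n, SameBlock P a b ↔ (a ≤ t ↔ b ≤ t) := by
      intro a b
      constructor
      · intro hsb
        exact ⟨sameside a b hsb, sameside b a (sb_symm hsb)⟩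
      · intro hab
        by_contra hnsb
        rcases lt_trichotomy a b with h | h | h
        · obtain ⟨h0, h1'⟩ := cross a b h hnsb
          have hbt : b ≤ t := hab.1 ((hiff a).1 h0)
          have := (hiff b).2 hbt
          omega
        · subst h; exact hnsb (sb_refl P a)
        · obtain ⟨h0, h1'⟩ := cross b a h (fun hs => hnsb (sb_symm hs))
          have hat : a ≤ t := hab.2 ((hiff b).1 h0)
          have := (hiff a).2 hat
          omega
    refine ⟨Sum.inr ⟨t.val, by omega⟩, ?_⟩
    have hP : split n t.val htn = P := by
      apply Finpartition.ext
      rw [split_parts]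
      have blocks : ∀ b ∈ P.parts, b = LS n t.val ∨ b = US n t.val := by
        intro b hb
        obtain ⟨x, hx⟩ := P.nonempty_of_mem_parts hb
        by_cases hxt : x ≤ t
        · left
          ext y
          rw [mem_LS, ← Fin.le_def]
          constructor
          · intro hy
            exact sameside x y ⟨b, hb, hx, hy⟩ hxt
          · intro hy
            obtain ⟨b', hb', hx', hy'⟩ := (hiff2 x y).2 (iff_of_true hxt hy)
            rwa [P.eq_of_mem_parts hb hb' hx hx']
        · right
          ext y
          rw [mem_US, ← Fin.lt_def]
          constructor
          · intro hy
            exact lt_of_not_ge (fun hyt => hxt (sameside y x (sb_symm ⟨b, hb, hx, hy⟩) hyt))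
          · intro hy
            obtain ⟨b', hb', hx', hy'⟩ := (hiff2 x y).2 (iff_of_false hxt (not_le_of_gt hy))
            rwa [P.eq_of_mem_parts hb hb' hx hx']
      ext b
      constructor
      · intro hb
        rcases Finset.mem_insert.1 hb with h | h
        · subst h
          have hm := P.part_mem.2 (Finset.mem_univ t)
          rcases blocks _ hm with h' | h'
          · rwa [← h']
          · have := mem_US.1 (h' ▸ P.mem_part (Finset.mem_univ t))
            omega
        · rw [Finset.mem_singleton] at h
          subst h
          have hm := P.part_mem.2 (Finset.mem_univ j0)
          rcases blocks _ hm with h' | h'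
          · have := mem_LS.1 (h' ▸ P.mem_part (Finset.mem_univ j0))
            have : t.val < j0.val := htj0
            omega
          · rwa [← h']
      · intro hb
        rcases blocks b hb with h | h <;> simp [h]
    have hc : (fun i : Fin n => if i.val ≤ t.val then (0 : Fin 2) else 1) = c := by
      funext a
      by_cases h : a.val ≤ t.val
      · rw [if_pos h]
        exact ((hiff a).2 (Fin.le_def.2 h)).symm
      · rw [if_neg h]
        have h' : c a ≠ 0 := fun hc0 => h (Fin.le_def.1 ((hiff a).1 hc0))
        omega
    show mkSplit n (⟨t.val, by omega⟩ : Fin (n-1)).val (by omega) = ⟨P, c⟩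
    simp only [mkSplit]
    congr 1

end Aux

theorem stmt1 : ∀ n : ℕ, 1 ≤ n →
    Nat.card {σ : CPart n 2 // ¬ Has1121 σ ∧ ¬ Has1221 σ} = 2 ^ n + n - 1 := by
  intro n hn
  have hbij : Function.Bijective (fun x : (Fin n → Fin 2) ⊕ Fin (n - 1) =>
      (⟨Aux.Fmap n hn x, Aux.avoid hn x⟩ :
        {σ : CPart n 2 // ¬ Has1121 σ ∧ ¬ Has1221 σ})) := by
    constructor
    · intro x y hxy
      exact Aux.Fmap_inj hn (congrArg Subtype.val hxy)
    · rintro ⟨σ, hσ1, hσ2⟩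
      obtain ⟨x, hx⟩ := Aux.surj hn σ hσ1 hσ2
      exact ⟨x, Subtype.ext hx⟩
  rw [← Nat.card_congr (Equiv.ofBijective _ hbij)]
  rw [Nat.card_sum]
  simp only [Nat.card_eq_fintype_card, Fintype.card_fun, Fintype.card_fin]
  have h2 : 1 ≤ 2 ^ n := Nat.one_le_two_pow
  omega
end

section
/- For n ≥ 1, the number of 2-colored set partitions of [n] avoiding the two patterns 1^1 2^2 and 1^2 2^1 in the pattern sense equals 2^n + 2(B(n) − 1), where B(n) is the n-th Bell number. -/
open Finset

section Aux
variable {n : ℕ}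

lemma parts_top_eq (hn : 0 < n) :
    (⊤ : Finpartition (univ : Finset (Fin n))).parts = {Finset.univ} := by
  have : Nonempty (Fin n) := ⟨⟨0, hn⟩⟩
  have h : (univ : Finset (Fin n)) ≠ ⊥ := Finset.univ_nonempty.ne_empty
  have : (⊤ : Finpartition (univ : Finset (Fin n))) = Finpartition.indiscrete h := dif_neg h
  rw [this]; simp

lemma sameBlock_top (hn : 0 < n) (i j : Fin n) :
    SameBlock (⊤ : Finpartition (univ : Finset (Fin n))) i j :=
  ⟨Finset.univ, by rw [parts_top_eq hn]; simp, mem_univ i, mem_univ j⟩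

lemma eq_top_of_univ_mem {P : Finpartition (univ : Finset (Fin n))} (hn : 0 < n)
    (h : Finset.univ ∈ P.parts) : P = ⊤ := by
  ext b
  rw [parts_top_eq hn, Finset.mem_singleton]
  constructor
  · intro hb
    obtain ⟨i, hi⟩ := P.nonempty_of_mem_parts hb
    exact P.eq_of_mem_parts hb h hi (mem_univ i)
  · rintro rfl; exact h

lemma not_sameBlock_of_ne_blocks {P : Finpartition (univ : Finset (Fin n))}
    {b c : Finset (Fin n)} (hb : b ∈ P.parts) (hc : c ∈ P.parts) (hbc : b ≠ c)
    {i j : Fin n} (hi : i ∈ b) (hj : j ∈ c) : ¬ SameBlock P i j := by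
  rintro ⟨d, hd, hid, hjd⟩
  exact hbc ((P.eq_of_mem_parts hb hd hi hid).trans (P.eq_of_mem_parts hd hc hjd hj))

/-- If σ avoids both patterns and its partition is not ⊤, the coloring is constant. -/
lemma col_const {σ : CPart n 2} (hn : 0 < n) (h1 : ¬ Has1122 σ) (h2 : ¬ Has1221 σ)
    (ht : σ.part ≠ ⊤) : ∀ i : Fin n, σ.col i = σ.col ⟨0, hn⟩ := by
  -- first: different blocks implies equal colors
  have key : ∀ i j : Fin n, ¬ SameBlock σ.part i j → σ.col i = σ.col j := by
    intro i j hij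
    have hsymm : ¬ SameBlock σ.part j i := by
      rintro ⟨b, hb, hjb, hib⟩; exact hij ⟨b, hb, hib, hjb⟩
    rcases lt_trichotomy i j with h | h | h
    · by_contra hne
      rcases lt_or_gt_of_ne hne with hlt | hgt
      · exact h1 ⟨i, j, h, hij, hlt⟩
      · exact h2 ⟨i, j, h, hij, hgt⟩
    · subst h; rfl
    · by_contra hne
      rcases lt_or_gt_of_ne hne with hlt | hgt
      · exact h2 ⟨j, i, h, hsymm, hlt⟩
      · exact h1 ⟨j, i, h, hsymm, hgt⟩
  intro i
  set z : Fin n := ⟨0, hn⟩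
  obtain ⟨b, hb, hib⟩ := σ.part.exists_mem (mem_univ i)
  by_cases hz : z ∈ b
  · -- i and z in the same block b; find an outside element
    have hbu : b ≠ Finset.univ := by
      rintro rfl; exact ht (eq_top_of_univ_mem hn hb)
    obtain ⟨k, hk⟩ : ∃ k : Fin n, k ∉ b := by
      by_contra hall
      push_neg at hall
      exact hbu (Finset.eq_univ_of_forall hall)
    obtain ⟨c, hc, hkc⟩ := σ.part.exists_mem (mem_univ k)
    have hbc : b ≠ c := by rintro rfl; exact hk hkc
    have h1' := key i k (not_sameBlock_of_ne_blocks hb hc hbc hib hkc)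
    have h2' := key k z (not_sameBlock_of_ne_blocks hc hb hbc.symm hkc hz)
    exact h1'.trans h2'
  · obtain ⟨c, hc, hzc⟩ := σ.part.exists_mem (mem_univ z)
    have hbc : b ≠ c := by rintro rfl; exact hz hzc
    exact key i z (not_sameBlock_of_ne_blocks hb hc hbc hib hzc)

lemma avoid_top (hn : 0 < n) (f : Fin n → Fin 2) :
    ¬ Has1122 (⟨⊤, f⟩ : CPart n 2) ∧ ¬ Has1221 (⟨⊤, f⟩ : CPart n 2) := by
  constructor <;> rintro ⟨i, j, _, hns, _⟩ <;> exact hns (sameBlock_top hn i j)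

lemma avoid_const (P : Finpartition (univ : Finset (Fin n))) (c : Fin 2) :
    ¬ Has1122 (⟨P, fun _ => c⟩ : CPart n 2) ∧ ¬ Has1221 (⟨P, fun _ => c⟩ : CPart n 2) := by
  constructor <;> rintro ⟨i, j, _, _, hlt⟩ <;> exact lt_irrefl c hlt

open Classical in
noncomputable def theEquiv (hn : 0 < n) :
    {σ : CPart n 2 // ¬ Has1122 σ ∧ ¬ Has1221 σ} ≃
      (Fin n → Fin 2) ⊕
        ({P : Finpartition (univ : Finset (Fin n)) // P ≠ ⊤} × Fin 2) where
  toFun σ := if h : σ.1.part = ⊤ then .inl σ.1.col else .inr (⟨σ.1.part, h⟩, σ.1.col ⟨0, hn⟩)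
  invFun x := x.elim (fun f => ⟨⟨⊤, f⟩, avoid_top hn f⟩)
    (fun pc => ⟨⟨pc.1.1, fun _ => pc.2⟩, avoid_const pc.1.1 pc.2⟩)
  left_inv := by
    rintro ⟨⟨P, f⟩, hσ⟩
    by_cases h : P = ⊤
    · simp only [h, dif_pos]
      subst h; rfl
    · simp only [dif_neg h]
      apply Subtype.ext
      show (⟨P, fun _ => f ⟨0, hn⟩⟩ : CPart n 2) = ⟨P, f⟩
      congr 1
      funext i
      exact (col_const hn hσ.1 hσ.2 h i).symm
  right_inv := by
    rintro (f | ⟨⟨P, hP⟩, c⟩)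
    · simp
    · exact dif_neg hP

end Aux

theorem stmt2 : ∀ n : ℕ, 1 ≤ n →
    Nat.card {σ : CPart n 2 // ¬ Has1122 σ ∧ ¬ Has1221 σ} = 2 ^ n + 2 * (bell n - 1) := by
  intro n hn
  rw [Nat.card_congr (theEquiv hn), Nat.card_sum, Nat.card_prod]
  have h1 : Nat.card (Fin n → Fin 2) = 2 ^ n := by
    simp [Nat.card_eq_fintype_card]
  have h2 : Nat.card {P : Finpartition (univ : Finset (Fin n)) // P ≠ ⊤} = bell n - 1 := by
    classical
    rw [Nat.card_eq_fintype_card, bell, Nat.card_eq_fintype_card]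
    rw [Fintype.card_subtype_compl (p := fun P => P = ⊤)]
    congr 1
    try exact Fintype.card_subtype_eq _
  rw [h1, h2]
  rw [Nat.card_eq_fintype_card (α := Fin 2), Fintype.card_fin]
  ring
end

section
/- For n ≥ 1, the number of 2-colored set partitions of [n] avoiding the patterns 1^1 1^2 and 1^2 1^1 in the pattern sense equals the sum over k from 0 to n of 2^k times the Stirling number of the second kind S(n,k). -/
/-- The Stirling number of the second kind: partitions of `[n]` into `k` blocks. -/
noncomputable def stirling (n k : ℕ) : ℕ :=
  Nat.card {P : Finpartition (Finset.univ : Finset (Fin n)) // P.parts.card = k}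

lemma col_const_s3 {n k : ℕ} (σ : CPart n k) (h : ¬ Has112 σ ∧ ¬ Has121 σ)
    {i j : Fin n} (hb : SameBlock σ.part i j) : σ.col i = σ.col j := by
  have key : ∀ a b : Fin n, a < b → SameBlock σ.part a b → σ.col a = σ.col b := by
    intro a b hab hsb
    rcases lt_trichotomy (σ.col a) (σ.col b) with h' | h' | h'
    · exact absurd ⟨a, b, hab, hsb, h'⟩ h.1
    · exact h'
    · exact absurd ⟨a, b, hab, hsb, h'⟩ h.2
  rcases lt_trichotomy i j with hij | rfl | hij
  · exact key i j hij hb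
  · rfl
  · exact (key j i hij ⟨hb.choose, hb.choose_spec.1, hb.choose_spec.2.2, hb.choose_spec.2.1⟩).symm

noncomputable def myEquiv (n : ℕ) :
    {σ : CPart n 2 // ¬ Has112 σ ∧ ¬ Has121 σ} ≃
    Σ P : Finpartition (Finset.univ : Finset (Fin n)), (P.parts → Fin 2) where
  toFun σ := ⟨σ.1.part, fun b => σ.1.col (Finpartition.nonempty_of_mem_parts _ b.2).choose⟩
  invFun x :=
    ⟨⟨x.1, fun i => x.2 ⟨x.1.part i, x.1.part_mem.mpr (Finset.mem_univ i)⟩⟩, by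
      constructor <;> rintro ⟨i, j, hij, ⟨b, hb, hib, hjb⟩, hc⟩ <;>
      · have h1 : x.1.part i = b := x.1.part_eq_of_mem hb hib
        have h2 : x.1.part j = b := x.1.part_eq_of_mem hb hjb
        simp only [CPart.col] at hc
        rw [show (⟨x.1.part i, x.1.part_mem.mpr (Finset.mem_univ i)⟩ :
            {b // b ∈ x.1.parts}) = ⟨x.1.part j, x.1.part_mem.mpr (Finset.mem_univ j)⟩ from
          Subtype.ext (h1.trans h2.symm)] at hc
        exact lt_irrefl _ hc⟩
  left_inv := by
    rintro ⟨⟨P, c⟩, h⟩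
    apply Subtype.ext
    simp only
    refine congrArg (CPart.mk P) (funext fun i => ?_)
    set b : {b // b ∈ P.parts} := ⟨P.part i, P.part_mem.mpr (Finset.mem_univ i)⟩
    have hch := (Finpartition.nonempty_of_mem_parts _ b.2).choose_spec
    exact (col_const_s3 ⟨P, c⟩ h ⟨b.1, b.2, hch, P.mem_part (Finset.mem_univ i)⟩)
  right_inv := by
    rintro ⟨P, f⟩
    refine Sigma.ext rfl (heq_of_eq (funext fun b => ?_))
    have hch := (Finpartition.nonempty_of_mem_parts _ b.2).choose_spec
    exact congrArg f (Subtype.ext (P.part_eq_of_mem b.2 hch))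

theorem stmt3 : ∀ n : ℕ, 1 ≤ n →
    Nat.card {σ : CPart n 2 // ¬ Has112 σ ∧ ¬ Has121 σ} =
      ∑ k ∈ Finset.range (n + 1), 2 ^ k * stirling n k := by
  intro n _
  rw [Nat.card_congr (myEquiv n), Nat.card_eq_fintype_card, Fintype.card_sigma]
  have h1 : ∀ P : Finpartition (Finset.univ : Finset (Fin n)),
      Fintype.card ({b // b ∈ P.parts} → Fin 2) = 2 ^ P.parts.card := by
    intro P
    rw [Fintype.card_fun, Fintype.card_fin, Fintype.card_coe]
  simp_rw [h1]
  rw [← Finset.sum_fiberwise_of_maps_to (g := fun P => P.parts.card)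
    (fun P _ => Finset.mem_range.mpr (Nat.lt_succ_of_le (by
      simpa using P.card_parts_le_card)))]
  refine Finset.sum_congr rfl fun k _ => ?_
  rw [Finset.sum_congr rfl (fun P hP => by
    rw [(Finset.mem_filter.mp hP).2]), Finset.sum_const, smul_eq_mul, mul_comm]
  congr 1
  rw [stirling, Nat.card_eq_fintype_card, Fintype.card_subtype]
end

section
/- Let a_n be the number of 2-colored set partitions of [n] avoiding both patterns 1^1 1^1 and 1^1 1^2 in the pattern sense. Then a_1 = 2, a_2 = 5, and for n ≥ 3, a_n = 2·a_{n−1} + (n−1)·a_{n−2}. -/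
/-- The number of 2-colored set partitions of `[m]` avoiding 1^1 1^1 and 1^1 1^2. -/
noncomputable def a (m : ℕ) : ℕ := Nat.card {σ : CPart m 2 // ¬ Has11 σ ∧ ¬ Has112 σ}

section Aux
open Finset


lemma sameBlock_iff {n : ℕ} {P : Finpartition (Finset.univ : Finset (Fin n))} {i j : Fin n} :
    SameBlock P i j ↔ j ∈ P.part i := by
  constructor
  · rintro ⟨b, hb, hib, hjb⟩
    rwa [P.part_eq_of_mem hb hib]
  · intro h
    exact ⟨P.part i, P.part_mem.2 (mem_univ i), P.mem_part (mem_univ i), h⟩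

lemma fp_ext {n : ℕ} {P Q : Finpartition (Finset.univ : Finset (Fin n))}
    (h : ∀ a b, SameBlock P a b ↔ SameBlock Q a b) : P = Q := by
  have hpart : ∀ a, P.part a = Q.part a := by
    intro a; ext b
    rw [← sameBlock_iff, ← sameBlock_iff]; exact h a b
  have hparts : P.parts = Q.parts := by
    ext t
    constructor
    · intro ht
      obtain ⟨x, hx⟩ := P.nonempty_of_mem_parts ht
      have : t = Q.part x := by rw [← hpart, P.part_eq_of_mem ht hx]
      exact this ▸ Q.part_mem.2 (mem_univ x)
    · intro ht
      obtain ⟨x, hx⟩ := Q.nonempty_of_mem_parts ht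
      have : t = P.part x := by rw [hpart, Q.part_eq_of_mem ht hx]
      exact this ▸ P.part_mem.2 (mem_univ x)
  cases P; cases Q; simpa using hparts


def MatG (α : Type) : Type :=
  {p : α → α ⊕ Fin 2 // ∀ i j, p i = Sum.inl j → j ≠ i ∧ p j = Sum.inl i}

instance matFintype (k : ℕ) : Fintype (MatG (Fin k)) := by
  unfold MatG; infer_instance

def matCongr {α β : Type} (e : α ≃ β) : MatG α ≃ MatG β where
  toFun p := ⟨fun b => Sum.map e id (p.1 (e.symm b)), by
    intro i j h
    dsimp only at h ⊢
    rcases hp : p.1 (e.symm i) with k | c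
    · rw [hp] at h
      simp only [Sum.map_inl, Sum.inl.injEq] at h
      subst h
      obtain ⟨h1, h2⟩ := p.2 _ _ hp
      refine ⟨fun hc => h1 (by rw [← hc]; simp), ?_⟩
      simp [h2]
    · rw [hp] at h; simp at h⟩
  invFun q := ⟨fun a => Sum.map e.symm id (q.1 (e a)), by
    intro i j h
    dsimp only at h ⊢
    rcases hq : q.1 (e i) with k | c
    · rw [hq] at h
      simp only [Sum.map_inl, Sum.inl.injEq] at h
      subst h
      obtain ⟨h1, h2⟩ := q.2 _ _ hq
      refine ⟨fun hc => h1 (by rw [← hc]; simp), ?_⟩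
      simp [h2]
    · rw [hq] at h; simp at h⟩
  left_inv p := by
    apply Subtype.ext; funext a
    simp only [Equiv.symm_apply_apply]
    rcases hp : p.1 a with k | c <;> simp
  right_inv q := by
    apply Subtype.ext; funext b
    simp only [Equiv.apply_symm_apply]
    rcases hq : q.1 b with k | c <;> simp

section Restrict
variable {α : Type} [DecidableEq α] (B : Finset α) (f : α → α ⊕ Fin 2)

/-- the restricted matching (junk value in impossible branch) -/
def downF (p : α → α ⊕ Fin 2) : {x : α // x ∉ B} → {x : α // x ∉ B} ⊕ Fin 2 :=
  fun m => match p m.1 with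
  | .inl j => if h : j ∈ B then .inr 0 else .inl ⟨j, h⟩
  | .inr c => .inr c

def upF (q : {x : α // x ∉ B} → {x : α // x ∉ B} ⊕ Fin 2) : α → α ⊕ Fin 2 :=
  fun x => if hx : x ∈ B then f x else
    match q ⟨x, hx⟩ with
    | .inl j => .inl j.1
    | .inr c => .inr c

lemma closed_notmem (Hf : ∀ b ∈ B, ∀ j, f b = Sum.inl j → j ∈ B ∧ j ≠ b ∧ f j = Sum.inl b) {p : MatG α} (hp : ∀ b ∈ B, p.1 b = f b) {x j : α} (hx : x ∉ B)
    (h : p.1 x = Sum.inl j) : j ∉ B := by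
  intro hjB
  have h2 := (p.2 _ _ h).2
  rw [hp j hjB] at h2
  exact hx (Hf j hjB _ h2).1

lemma downF_eq_inl (Hf : ∀ b ∈ B, ∀ j, f b = Sum.inl j → j ∈ B ∧ j ≠ b ∧ f j = Sum.inl b) {p : MatG α} (hp : ∀ b ∈ B, p.1 b = f b) {m : {x : α // x ∉ B}}
    {j : {x : α // x ∉ B}} : downF B p.1 m = Sum.inl j ↔ p.1 m.1 = Sum.inl j.1 := by
  unfold downF
  rcases hm : p.1 m.1 with k | c
  · have hk : k ∉ B := closed_notmem B f Hf hp m.2 hm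
    simp only [dif_neg hk, Sum.inl.injEq]
    simp [Subtype.ext_iff]
  · simp

def matRestrict (Hf : ∀ b ∈ B, ∀ j, f b = Sum.inl j → j ∈ B ∧ j ≠ b ∧ f j = Sum.inl b) : {p : MatG α // ∀ b ∈ B, p.1 b = f b} ≃ MatG {x : α // x ∉ B} where
  toFun p := ⟨downF B p.1.1, by
    intro i j h
    rw [downF_eq_inl B f Hf p.2] at h
    obtain ⟨h1, h2⟩ := p.1.2 _ _ h
    refine ⟨fun hc => h1 (congrArg Subtype.val hc), ?_⟩
    rw [downF_eq_inl B f Hf p.2]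
    exact h2⟩
  invFun q := ⟨⟨upF B f q.1, by
    intro i j h
    unfold upF at h ⊢
    split at h
    · next hi =>
      obtain ⟨hjB, hji, hfj⟩ := Hf i hi j h
      rw [dif_pos hjB, hfj]
      exact ⟨hji, rfl⟩
    · next hi =>
      rcases hq : q.1 ⟨i, hi⟩ with k | c
      · rw [hq] at h
        simp only [Sum.inl.injEq] at h
        subst h
        obtain ⟨h1, h2⟩ := q.2 _ _ hq
        refine ⟨fun hc => h1 (Subtype.ext hc), ?_⟩
        rw [dif_neg k.2, h2]
      · rw [hq] at h; simp at h⟩, by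
    intro b hb
    show upF B f q.1 b = f b
    unfold upF
    exact dif_pos hb⟩
  left_inv p := by
    apply Subtype.ext; apply Subtype.ext; funext x
    show upF B f (downF B p.1.1) x = p.1.1 x
    unfold upF
    split
    · next hx => exact (p.2 x hx).symm
    · next hx =>
      unfold downF
      rcases hm : p.1.1 x with k | c
      · have hk : k ∉ B := closed_notmem B f Hf p.2 hx hm
        simp [dif_neg hk]
      · simp
  right_inv q := by
    apply Subtype.ext; funext m
    show downF B (upF B f q.1) m = q.1 m
    unfold downF upF
    rw [dif_neg m.2]
    rcases hq : q.1 ⟨m.1, m.2⟩ with k | c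
    · simp [dif_neg k.2]
    · rfl

end Restrict


noncomputable def mm (k : ℕ) : ℕ := Fintype.card (MatG (Fin k))

lemma card_compl_one {n : ℕ} (L : Fin (n+1)) :
    Fintype.card {x : Fin (n+1) // x ∉ ({L} : Finset (Fin (n+1)))} = n := by
  rw [Fintype.card_subtype_compl]
  simp

lemma card_compl_two {n : ℕ} (L j : Fin (n+2)) (h : j ≠ L) :
    Fintype.card {x : Fin (n+2) // x ∉ ({L, j} : Finset (Fin (n+2)))} = n := by
  rw [Fintype.card_subtype_compl, Fintype.card_fin, Fintype.card_coe,
    Finset.card_insert_of_notMem (by simp [Ne.symm h]), Finset.card_singleton]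
  omega

lemma mm_rec (n : ℕ) : mm (n+2) = 2 * mm (n+1) + (n+1) * mm n := by
  classical
  set L : Fin (n+2) := Fin.last (n+1) with hL
  have hcard : mm (n+2) = ∑ v : Fin (n+2) ⊕ Fin 2,
      Fintype.card {p : MatG (Fin (n+2)) // p.1 L = v} := by
    rw [mm, Fintype.card_congr (Equiv.sigmaFiberEquiv (fun p : MatG (Fin (n+2)) => p.1 L)).symm,
      Fintype.card_sigma]
  -- inr fibers
  have hinr : ∀ c : Fin 2,
      Fintype.card {p : MatG (Fin (n+2)) // p.1 L = Sum.inr c} = mm (n+1) := by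
    intro c
    have e1 : {p : MatG (Fin (n+2)) // p.1 L = Sum.inr c} ≃
        {p : MatG (Fin (n+2)) // ∀ b ∈ ({L} : Finset (Fin (n+2))), p.1 b = Sum.inr c} :=
      Equiv.subtypeEquivRight (by intro p; simp)
    have e2 := matRestrict ({L} : Finset (Fin (n+2))) (fun _ => Sum.inr c)
      (by intro b hb j h; simp at h)
    have e3 : {x : Fin (n+2) // x ∉ ({L} : Finset (Fin (n+2)))} ≃ Fin (n+1) :=
      Fintype.equivFinOfCardEq (card_compl_one L)
    rw [Fintype.card_congr ((e1.trans e2).trans (matCongr e3)), mm]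
  -- inl fibers
  have hinlL : Fintype.card {p : MatG (Fin (n+2)) // p.1 L = Sum.inl L} = 0 := by
    rw [Fintype.card_eq_zero_iff]
    exact ⟨fun p => (p.1.2 L L p.2).1 rfl⟩
  have hinl : ∀ j : Fin (n+2), j ≠ L →
      Fintype.card {p : MatG (Fin (n+2)) // p.1 L = Sum.inl j} = mm n := by
    intro j hj
    let f : Fin (n+2) → Fin (n+2) ⊕ Fin 2 := fun x => if x = L then Sum.inl j else Sum.inl L
    have Hf : ∀ b ∈ ({L, j} : Finset (Fin (n+2))), ∀ k, f b = Sum.inl k →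
        k ∈ ({L, j} : Finset (Fin (n+2))) ∧ k ≠ b ∧ f k = Sum.inl b := by
      intro b hb k hk
      simp only [Finset.mem_insert, Finset.mem_singleton] at hb ⊢
      rcases hb with rfl | rfl
      · simp only [f, if_pos rfl, Sum.inl.injEq] at hk
        subst hk
        exact ⟨Or.inr rfl, hj, by simp [f, if_neg hj]⟩
      · simp only [f, if_neg hj, Sum.inl.injEq] at hk
        subst hk
        exact ⟨Or.inl rfl, Ne.symm hj, by simp [f]⟩
    have e1 : {p : MatG (Fin (n+2)) // p.1 L = Sum.inl j} ≃
        {p : MatG (Fin (n+2)) // ∀ b ∈ ({L, j} : Finset (Fin (n+2))), p.1 b = f b} := by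
      apply Equiv.subtypeEquivRight
      intro p
      constructor
      · intro h b hb
        simp only [Finset.mem_insert, Finset.mem_singleton] at hb
        rcases hb with rfl | rfl
        · simpa [f] using h
        · simpa [f, if_neg hj] using (p.2 _ _ h).2
      · intro h
        have := h L (by simp)
        simpa [f] using this
    have e3 : {x : Fin (n+2) // x ∉ ({L, j} : Finset (Fin (n+2)))} ≃ Fin n :=
      Fintype.equivFinOfCardEq (card_compl_two L j hj)
    rw [Fintype.card_congr ((e1.trans (matRestrict _ f Hf)).trans (matCongr e3)), mm]
  rw [hcard, Fintype.sum_sum_type]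
  have h1 : ∑ c : Fin 2, Fintype.card {p : MatG (Fin (n+2)) // p.1 L = Sum.inr c}
      = 2 * mm (n+1) := by
    simp only [hinr, Finset.sum_const, Finset.card_univ, Fintype.card_fin, smul_eq_mul]
  have h2 : ∑ j : Fin (n+2), Fintype.card {p : MatG (Fin (n+2)) // p.1 L = Sum.inl j}
      = (n+1) * mm n := by
    rw [← Finset.add_sum_erase _ _ (mem_univ L), hinlL, zero_add]
    rw [Finset.sum_congr rfl (fun j hjm => hinl j (Finset.ne_of_mem_erase hjm))]
    rw [Finset.sum_const, smul_eq_mul]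
    congr 1
    rw [Finset.card_erase_of_mem (mem_univ L), Finset.card_univ, Fintype.card_fin]
    omega
  rw [h1, h2]
  ring


lemma cpart_ext {n k : ℕ} {σ τ : CPart n k} (h1 : σ.part = τ.part) (h2 : σ.col = τ.col) :
    σ = τ := by
  cases σ; cases τ
  simp_all

def colOf {n : ℕ} (p : Fin n → Fin n ⊕ Fin 2) (i : Fin n) : Fin 2 :=
  match p i with
  | .inl j => if i < j then 1 else 0
  | .inr c => c

def relOf {n : ℕ} (p : MatG (Fin n)) : Setoid (Fin n) where
  r i j := i = j ∨ p.1 i = Sum.inl j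
  iseqv := by
    refine ⟨fun _ => Or.inl rfl, ?_, ?_⟩
    · rintro i j (rfl | h)
      · exact Or.inl rfl
      · exact Or.inr (p.2 _ _ h).2
    · rintro i j k (rfl | h) (rfl | h')
      · exact Or.inl rfl
      · exact Or.inr h'
      · exact Or.inr h
      · obtain ⟨-, hji⟩ := p.2 _ _ h
        rw [hji] at h'
        exact Or.inl (Sum.inl.inj h')

instance {n : ℕ} (p : MatG (Fin n)) : DecidableRel (relOf p).r := fun i j =>
  inferInstanceAs (Decidable (i = j ∨ p.1 i = Sum.inl j))

noncomputable def Gmap {n : ℕ} (p : MatG (Fin n)) : CPart n 2 :=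
  ⟨Finpartition.ofSetoid (relOf p), colOf p.1⟩

lemma sameBlock_Gmap {n : ℕ} (p : MatG (Fin n)) (i j : Fin n) :
    SameBlock (Gmap p).part i j ↔ (i = j ∨ p.1 i = Sum.inl j) := by
  rw [sameBlock_iff]
  exact Finpartition.mem_part_ofSetoid_iff_rel

lemma Gmap_avoid {n : ℕ} (p : MatG (Fin n)) : ¬ Has11 (Gmap p) ∧ ¬ Has112 (Gmap p) := by
  have key : ∀ i j : Fin n, i < j → SameBlock (Gmap p).part i j →
      (Gmap p).col i = 1 ∧ (Gmap p).col j = 0 := by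
    intro i j hij hsb
    rw [sameBlock_Gmap] at hsb
    rcases hsb with rfl | h
    · exact absurd hij (lt_irrefl _)
    · have h2 := (p.2 _ _ h).2
      constructor
      · show colOf p.1 i = 1
        unfold colOf
        rw [h]
        simp [hij]
      · show colOf p.1 j = 0
        unfold colOf
        rw [h2]
        simp [not_lt_of_gt hij]
  constructor
  · rintro ⟨i, j, hij, hsb, hc⟩
    obtain ⟨h1, h0⟩ := key i j hij hsb
    rw [h1, h0] at hc
    exact absurd hc (by decide)
  · rintro ⟨i, j, hij, hsb, hc⟩
    obtain ⟨h1, h0⟩ := key i j hij hsb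
    rw [h1, h0] at hc
    exact absurd hc (by decide)

lemma Gmap_inj {n : ℕ} : Function.Injective (Gmap (n := n)) := by
  intro p q h
  have hpart : (Gmap p).part = (Gmap q).part := congrArg CPart.part h
  have hcol : colOf p.1 = colOf q.1 := congrArg CPart.col h
  have hrel : ∀ i j, (i = j ∨ p.1 i = Sum.inl j) ↔ (i = j ∨ q.1 i = Sum.inl j) := by
    intro i j
    rw [← sameBlock_Gmap, ← sameBlock_Gmap]
    unfold SameBlock
    rw [hpart]
  apply Subtype.ext; funext i
  rcases hp : p.1 i with j | c
  · have hne := (p.2 _ _ hp).1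
    have := (hrel i j).mp (Or.inr hp)
    rcases this with rfl | h'
    · exact absurd rfl hne
    · exact h'.symm
  · rcases hq : q.1 i with j | c'
    · have hne := (q.2 _ _ hq).1
      have := (hrel i j).mpr (Or.inr hq)
      rcases this with rfl | h'
      · exact absurd rfl hne
      · rw [hp] at h'; exact absurd h' (by simp)
    · have hcc : colOf p.1 i = colOf q.1 i := congrFun hcol i
      unfold colOf at hcc
      rw [hp, hq] at hcc
      exact congrArg Sum.inr hcc

lemma Gmap_surj {n : ℕ} (σ : CPart n 2) (h11 : ¬ Has11 σ) (h112 : ¬ Has112 σ) :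
    ∃ p : MatG (Fin n), Gmap p = σ := by
  classical
  set S : Fin n → Finset (Fin n) := fun i => univ.filter (fun j => j ≠ i ∧ j ∈ σ.part.part i)
    with hS
  -- uniqueness of partner
  have huniq : ∀ i, ∀ j ∈ S i, ∀ j' ∈ S i, j = j' := by
    intro i j hj j' hj'
    simp only [hS, mem_filter, mem_univ, true_and] at hj hj'
    by_contra hne
    have hcard : Fintype.card (Fin 2) < ({i, j, j'} : Finset (Fin n)).card := by
      rw [Finset.card_insert_of_notMem (by simp [Ne.symm hj.1, Ne.symm hj'.1]),
        Finset.card_pair hne, Fintype.card_fin]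
      norm_num
    obtain ⟨x, hx, y, hy, hxy, hcxy⟩ :=
      Finset.exists_ne_map_eq_of_card_lt_of_maps_to (by simpa using hcard)
        (fun x _ => mem_univ (σ.col x))
    have hmem : ∀ z ∈ ({i, j, j'} : Finset (Fin n)), z ∈ σ.part.part i := by
      intro z hz
      simp only [Finset.mem_insert, Finset.mem_singleton] at hz
      rcases hz with rfl | rfl | rfl
      · exact σ.part.mem_part (mem_univ z)
      · exact hj.2
      · exact hj'.2
    have hsb : ∀ u v : Fin n, u ∈ ({i, j, j'} : Finset (Fin n)) →
        v ∈ ({i, j, j'} : Finset (Fin n)) → SameBlock σ.part u v :=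
      fun u v hu hv => ⟨σ.part.part i, σ.part.part_mem.2 (mem_univ i), hmem u hu, hmem v hv⟩
    rcases lt_or_gt_of_ne hxy with hlt | hgt
    · exact h11 ⟨x, y, hlt, hsb x y hx hy, hcxy⟩
    · exact h11 ⟨y, x, hgt, hsb y x hy hx, hcxy.symm⟩
  set p : Fin n → Fin n ⊕ Fin 2 := fun i =>
    if h : (S i).Nonempty then Sum.inl ((S i).min' h) else Sum.inr (σ.col i) with hp
  have key : ∀ i j, p i = Sum.inl j ↔ (j ≠ i ∧ j ∈ σ.part.part i) := by
    intro i j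
    constructor
    · intro h
      rw [hp] at h
      simp only at h
      split at h
      · next hne =>
        obtain rfl : (S i).min' hne = j := by simpa using h
        have := (S i).min'_mem hne
        simp only [hS, mem_filter, mem_univ, true_and] at this
        exact this
      · simp at h
    · rintro ⟨hne, hmem⟩
      have hjS : j ∈ S i := by simp [hS, hne, hmem]
      have hNe : (S i).Nonempty := ⟨j, hjS⟩
      rw [hp]
      simp only [dif_pos hNe, Sum.inl.injEq]
      exact huniq i _ ((S i).min'_mem hNe) j hjS
  have hprop : ∀ i j, p i = Sum.inl j → j ≠ i ∧ p j = Sum.inl i := by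
    intro i j h
    obtain ⟨hne, hmem⟩ := (key i j).mp h
    refine ⟨hne, (key j i).mpr ⟨Ne.symm hne, ?_⟩⟩
    rw [σ.part.part_eq_of_mem (σ.part.part_mem.2 (mem_univ i)) hmem]
    exact σ.part.mem_part (mem_univ i)
  refine ⟨⟨p, hprop⟩, ?_⟩
  apply cpart_ext
  · apply fp_ext
    intro x y
    refine (sameBlock_Gmap (⟨p, hprop⟩ : MatG (Fin n)) x y).trans ?_
    show (x = y ∨ p x = Sum.inl y) ↔ _
    rw [key]
    rw [sameBlock_iff]
    constructor
    · rintro (rfl | ⟨-, hmem⟩)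
      · exact σ.part.mem_part (mem_univ x)
      · exact hmem
    · intro hmem
      by_cases hxy : x = y
      · exact Or.inl hxy
      · exact Or.inr ⟨Ne.symm hxy, hmem⟩
  · funext i
    show colOf p i = σ.col i
    unfold colOf
    rcases hpi : p i with j | c
    · obtain ⟨hne, hmem⟩ := (key i j).mp hpi
      have hsb : SameBlock σ.part i j := sameBlock_iff.mpr hmem
      rcases lt_or_gt_of_ne (Ne.symm hne) with hij | hji
      · -- i < j : col i = 1
        simp only [if_pos hij]
        have hc1 : ¬ σ.col i = σ.col j := fun hc => h11 ⟨i, j, hij, hsb, hc⟩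
        have hc2 : ¬ σ.col i < σ.col j := fun hc => h112 ⟨i, j, hij, hsb, hc⟩
        have h1 := (σ.col i).isLt
        have h2 := (σ.col j).isLt
        have hne2 : (σ.col i).val ≠ (σ.col j).val := fun hc => hc1 (Fin.ext hc)
        have hlt2 : ¬ (σ.col i).val < (σ.col j).val := hc2
        apply Fin.ext
        simp only [Fin.val_one]
        omega
      · -- j < i : col i = 0
        simp only [if_neg (not_lt_of_gt hji)]
        have hsb' : SameBlock σ.part j i := by
          obtain ⟨b, hb, h1, h2⟩ := hsb; exact ⟨b, hb, h2, h1⟩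
        have hc1 : ¬ σ.col j = σ.col i := fun hc => h11 ⟨j, i, hji, hsb', hc⟩
        have hc2 : ¬ σ.col j < σ.col i := fun hc => h112 ⟨j, i, hji, hsb', hc⟩
        have h1 := (σ.col i).isLt
        have h2 := (σ.col j).isLt
        have hne2 : (σ.col j).val ≠ (σ.col i).val := fun hc => hc1 (Fin.ext hc)
        have hlt2 : ¬ (σ.col j).val < (σ.col i).val := hc2
        apply Fin.ext
        simp only [Fin.val_zero]
        omega
    · rw [hp] at hpi
      simp only at hpi
      split at hpi
      · simp at hpi
      · simpa using hpi.symm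

lemma a_eq_mm (n : ℕ) : a n = mm n := by
  have hbij : Function.Bijective
      (fun p : MatG (Fin n) => (⟨Gmap p, Gmap_avoid p⟩ :
        {σ : CPart n 2 // ¬ Has11 σ ∧ ¬ Has112 σ})) := by
    constructor
    · intro p q h
      exact Gmap_inj (congrArg Subtype.val h)
    · rintro ⟨σ, h11, h112⟩
      obtain ⟨p, hp⟩ := Gmap_surj σ h11 h112
      exact ⟨p, Subtype.ext hp⟩
  rw [a, mm, ← Nat.card_eq_fintype_card]
  exact (Nat.card_congr (Equiv.ofBijective _ hbij)).symm

lemma mm_one : mm 1 = 2 := by decide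
lemma mm_two : mm 2 = 5 := by decide

end Aux

theorem stmt5 : a 1 = 2 ∧ a 2 = 5 ∧
    ∀ n : ℕ, 3 ≤ n → a n = 2 * a (n - 1) + (n - 1) * a (n - 2) := by
  refine ⟨by rw [a_eq_mm]; exact mm_one, by rw [a_eq_mm]; exact mm_two, ?_⟩
  intro n hn
  obtain ⟨k, rfl⟩ : ∃ k, n = k + 3 := ⟨n - 3, by omega⟩
  show a (k+3) = 2 * a (k+2) + (k+2) * a (k+1)
  rw [a_eq_mm, a_eq_mm, a_eq_mm]
  exact mm_rec (k+1)
end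

section
/- For n ≥ 2, the number of 2-colored set partitions of [n] avoiding all three patterns 1^1 1^1, 1^1 2^2, and 1^2 2^1 in the pattern sense equals 2 if n ≠ 2, and equals 4 if n = 2. -/
section Aux

variable {n : ℕ}

lemma sameBlock_refl (P : Finpartition (Finset.univ : Finset (Fin n))) (i : Fin n) :
    SameBlock P i i :=
  ⟨P.part i, P.part_mem.2 (Finset.mem_univ i), P.mem_part (Finset.mem_univ i),
    P.mem_part (Finset.mem_univ i)⟩

lemma sameBlock_symm {P : Finpartition (Finset.univ : Finset (Fin n))} {i j : Fin n}
    (h : SameBlock P i j) : SameBlock P j i := by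
  obtain ⟨b, hb, hi, hj⟩ := h; exact ⟨b, hb, hj, hi⟩

lemma sameBlock_trans {P : Finpartition (Finset.univ : Finset (Fin n))} {i j k : Fin n}
    (h1 : SameBlock P i j) (h2 : SameBlock P j k) : SameBlock P i k := by
  obtain ⟨b, hb, hi, hj⟩ := h1
  obtain ⟨c, hc, hj', hk⟩ := h2
  exact ⟨b, hb, hi, (P.eq_of_mem_parts hc hb hj' hj) ▸ hk⟩

lemma sameBlock_bot {i j : Fin n}
    (h : SameBlock (⊥ : Finpartition (Finset.univ : Finset (Fin n))) i j) : i = j := by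
  obtain ⟨b, hb, hi, hj⟩ := h
  rw [Finpartition.mem_bot_iff] at hb
  obtain ⟨a, -, rfl⟩ := hb
  rw [Finset.mem_singleton] at hi hj
  rw [hi, hj]

lemma eq_bot_of_sameBlock {P : Finpartition (Finset.univ : Finset (Fin n))}
    (h : ∀ i j, SameBlock P i j → i = j) : P = ⊥ := by
  ext b
  rw [Finpartition.mem_bot_iff]
  constructor
  · intro hb
    obtain ⟨x, hx⟩ := P.nonempty_of_mem_parts hb
    refine ⟨x, Finset.mem_univ x, ?_⟩
    ext y
    simp only [Finset.mem_singleton]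
    constructor
    · rintro rfl; exact hx
    · intro hy; exact (h x y ⟨b, hb, hx, hy⟩).symm
  · rintro ⟨a, -, rfl⟩
    have hpa : P.part a = {a} := by
      apply Finset.Subset.antisymm
      · intro y hy
        have := h a y ⟨P.part a, P.part_mem.2 (Finset.mem_univ a),
          P.mem_part (Finset.mem_univ a), hy⟩
        simp [← this]
      · intro y hy
        rw [Finset.mem_singleton] at hy
        subst hy
        exact P.mem_part (Finset.mem_univ y)
    exact hpa ▸ P.part_mem.2 (Finset.mem_univ a)

lemma col_ne_of_sameBlock {σ : CPart n 2} (H : ¬ Has11 σ) {i j : Fin n} (hij : i ≠ j)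
    (hs : SameBlock σ.part i j) : σ.col i ≠ σ.col j := by
  intro hc
  rcases lt_or_gt_of_ne hij with h | h
  · exact H ⟨i, j, h, hs, hc⟩
  · exact H ⟨j, i, h, sameBlock_symm hs, hc.symm⟩

lemma col_eq_of_not_sameBlock {σ : CPart n 2} (H2 : ¬ Has1122 σ) (H3 : ¬ Has1221 σ)
    {i j : Fin n} (hs : ¬ SameBlock σ.part i j) : σ.col i = σ.col j := by
  by_contra hc
  have hs' : ¬ SameBlock σ.part j i := fun hh => hs (sameBlock_symm hh)
  rcases lt_trichotomy i j with h | h | h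
  · rcases lt_or_gt_of_ne hc with h' | h'
    · exact H2 ⟨i, j, h, hs, h'⟩
    · exact H3 ⟨i, j, h, hs, h'⟩
  · exact hc (by rw [h])
  · rcases lt_or_gt_of_ne hc with h' | h'
    · exact H3 ⟨j, i, h, hs', h'⟩
    · exact H2 ⟨j, i, h, hs', h'⟩

/-- The one-block partition of `Fin 2`. -/
def top2 : Finpartition (Finset.univ : Finset (Fin 2)) :=
  Finpartition.indiscrete (by decide)

lemma sameBlock_top2 (i j : Fin 2) : SameBlock top2 i j :=
  ⟨Finset.univ, by simp [top2], Finset.mem_univ i, Finset.mem_univ j⟩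

lemma eq_top2 {P : Finpartition (Finset.univ : Finset (Fin 2))} (h : SameBlock P 0 1) :
    P = top2 := by
  obtain ⟨b, hb, h0, h1⟩ := h
  have hbu : b = Finset.univ := by
    apply Finset.eq_univ_of_forall
    intro x
    fin_cases x
    exacts [h0, h1]
  subst hbu
  ext c
  simp only [top2, Finpartition.indiscrete, Finset.mem_singleton]
  constructor
  · intro hc
    obtain ⟨x, hx⟩ := P.nonempty_of_mem_parts hc
    exact P.eq_of_mem_parts hc hb hx (Finset.mem_univ x)
  · rintro rfl; exact hb

end Aux

theorem stmt8 : ∀ n : ℕ, 2 ≤ n →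
    Nat.card {σ : CPart n 2 // ¬ Has11 σ ∧ ¬ Has1122 σ ∧ ¬ Has1221 σ} = if n = 2 then 4 else 2 := by
  intro n hn
  by_cases h2 : n = 2
  · subst h2
    rw [if_pos rfl]
    have e : {σ : CPart 2 2 // ¬ Has11 σ ∧ ¬ Has1122 σ ∧ ¬ Has1221 σ} ≃ Fin 2 × Fin 2 := {
      toFun := fun σ => (σ.1.col 0, σ.1.col 1)
      invFun := fun p =>
        if h : p.1 = p.2 then
          ⟨⟨⊥, fun _ => p.1⟩, by
            refine ⟨?_, ?_, ?_⟩ <;> rintro ⟨i, j, hij, hs, hc⟩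
            · exact absurd (sameBlock_bot hs) (ne_of_lt hij)
            · exact lt_irrefl _ hc
            · exact lt_irrefl _ hc⟩
        else
          ⟨⟨top2, fun i => if i = 0 then p.1 else p.2⟩, by
            refine ⟨?_, ?_, ?_⟩ <;> rintro ⟨i, j, hij, hs, hc⟩
            · have hij' : i = 0 ∧ j = 1 := by
                fin_cases i <;> fin_cases j <;> simp_all
              obtain ⟨rfl, rfl⟩ := hij'
              simp at hc
              exact h hc
            · exact hs (sameBlock_top2 i j)
            · exact hs (sameBlock_top2 i j)⟩
      left_inv := by
        rintro ⟨σ, H1, H2, H3⟩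
        by_cases hc : σ.col 0 = σ.col 1
        · have hns : ¬ SameBlock σ.part 0 1 := fun hs =>
            col_ne_of_sameBlock H1 (by decide) hs hc
          have hp : σ.part = ⊥ := by
            apply eq_bot_of_sameBlock
            intro i j hs
            fin_cases i <;> fin_cases j
            · rfl
            · exact absurd hs hns
            · exact absurd (sameBlock_symm hs) hns
            · rfl
          apply Subtype.ext
          simp only [dif_pos hc]
          obtain ⟨p, c⟩ := σ
          simp only at hp hc
          subst hp
          simp only [CPart.mk.injEq, true_and]
          funext i
          fin_cases i
          · rfl
          · exact hc
        · have hs : SameBlock σ.part 0 1 := by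
            by_contra hns
            exact hc (col_eq_of_not_sameBlock H2 H3 hns)
          have hp : σ.part = top2 := eq_top2 hs
          apply Subtype.ext
          simp only [dif_neg hc]
          obtain ⟨p, c⟩ := σ
          simp only at hp hc
          subst hp
          simp only [CPart.mk.injEq, true_and]
          funext i
          fin_cases i <;> simp
      right_inv := by
        rintro ⟨a, b⟩
        by_cases h : a = b
        · simp only [dif_pos h]
          exact Prod.ext rfl h
        · simp only [dif_neg h]
          simp
    }
    rw [Nat.card_congr e]
    simp [Nat.card_eq_fintype_card]
  · rw [if_neg h2]
    have hn3 : 3 ≤ n := by omega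
    have h0 : (0 : ℕ) < n := by omega
    set z : Fin n := ⟨0, h0⟩ with hz
    have e : {σ : CPart n 2 // ¬ Has11 σ ∧ ¬ Has1122 σ ∧ ¬ Has1221 σ} ≃ Fin 2 := {
      toFun := fun σ => σ.1.col z
      invFun := fun c =>
        ⟨⟨⊥, fun _ => c⟩, by
          refine ⟨?_, ?_, ?_⟩ <;> rintro ⟨i, j, hij, hs, hc⟩
          · exact absurd (sameBlock_bot hs) (ne_of_lt hij)
          · exact lt_irrefl _ hc
          · exact lt_irrefl _ hc⟩
      left_inv := by
        rintro ⟨σ, H1, H2, H3⟩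
        have key : ∀ i j : Fin n, SameBlock σ.part i j → i = j := by
          intro i j hs
          by_contra hne
          have hcc : σ.col i ≠ σ.col j := col_ne_of_sameBlock H1 hne hs
          obtain ⟨m, hmi, hmj⟩ : ∃ m : Fin n, m ≠ i ∧ m ≠ j := by
            by_contra hcon
            push_neg at hcon
            have hall : ∀ m : Fin n, m = i ∨ m = j := fun m =>
              (eq_or_ne m i).imp id (hcon m)
            have h1 : (1 : ℕ) < n := by omega
            have h2' : (2 : ℕ) < n := by omega
            have a0 := hall ⟨0, h0⟩
            have a1 := hall ⟨1, h1⟩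
            have a2 := hall ⟨2, h2'⟩
            simp only [Fin.ext_iff] at a0 a1 a2
            omega
          by_cases hmi' : SameBlock σ.part m i
          · have hmj' : SameBlock σ.part m j := sameBlock_trans hmi' hs
            have c1 : σ.col m ≠ σ.col i := col_ne_of_sameBlock H1 hmi hmi'
            have c2 : σ.col m ≠ σ.col j := col_ne_of_sameBlock H1 hmj hmj'
            have tri : ∀ x y w : Fin 2, x ≠ y → x ≠ w → y ≠ w → False := by decide
            exact tri _ _ _ c1 c2 hcc
          · have c1 : σ.col m = σ.col i := col_eq_of_not_sameBlock H2 H3 hmi'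
            have hmj' : ¬ SameBlock σ.part m j := fun hh =>
              hmi' (sameBlock_trans hh (sameBlock_symm hs))
            have c2 : σ.col m = σ.col j := col_eq_of_not_sameBlock H2 H3 hmj'
            exact hcc (c1 ▸ c2)
        have hp : σ.part = ⊥ := eq_bot_of_sameBlock key
        have hcol : ∀ i, σ.col i = σ.col z := by
          intro i
          rcases eq_or_ne i z with rfl | hne
          · rfl
          · have hns : ¬ SameBlock σ.part z i := fun hs => hne ((key z i hs).symm)
            exact (col_eq_of_not_sameBlock H2 H3 hns).symm
        apply Subtype.ext
        obtain ⟨p, c⟩ := σ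
        simp only at hp hcol ⊢
        subst hp
        simp only [CPart.mk.injEq, true_and]
        exact funext fun i => (hcol i).symm
      right_inv := fun c => rfl
    }
    rw [Nat.card_congr e]
    simp
end

section
/- For n ≥ 1, the number of 2-colored set partitions of [n] avoiding the three patterns 1^1 1^1, 1^1 1^2, and 1^1 2^2 in the pattern sense equals the sum over k from 0 to n of C(n,k)·⌊k/2⌋!. -/
open Finset

namespace Stmt11Aux

/-! ### Generalities on `SameBlock` -/

lemma fin2_cases (c : Fin 2) : c = 0 ∨ c = 1 := by omega

lemma fin2_lt_iff {c d : Fin 2} : c < d ↔ c = 0 ∧ d = 1 := by omega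

lemma fin2_ne_ne {a b c : Fin 2} (h1 : a ≠ c) (h2 : b ≠ c) : a = b := by omega

lemma sameBlock_iff_part_eq {n : ℕ} (P : Finpartition (Finset.univ : Finset (Fin n)))
    (i j : Fin n) : SameBlock P i j ↔ P.part i = P.part j := by
  constructor
  · rintro ⟨b, hb, hi, hj⟩
    rw [P.part_eq_of_mem hb hi, P.part_eq_of_mem hb hj]
  · intro h
    refine ⟨P.part i, P.part_mem.2 (mem_univ i), P.mem_part (mem_univ i), ?_⟩
    rw [h]; exact P.mem_part (mem_univ j)

lemma sameBlock_refl {n : ℕ} (P : Finpartition (Finset.univ : Finset (Fin n))) (i : Fin n) :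
    SameBlock P i i := (sameBlock_iff_part_eq P i i).2 rfl

lemma sameBlock_symm {n : ℕ} {P : Finpartition (Finset.univ : Finset (Fin n))} {i j : Fin n}
    (h : SameBlock P i j) : SameBlock P j i := by
  rw [sameBlock_iff_part_eq] at h ⊢; exact h.symm

lemma sameBlock_trans {n : ℕ} {P : Finpartition (Finset.univ : Finset (Fin n))} {i j k : Fin n}
    (h : SameBlock P i j) (h' : SameBlock P j k) : SameBlock P i k := by
  rw [sameBlock_iff_part_eq] at h h' ⊢; exact h.trans h'

lemma sameBlock_iff_mem_part {n : ℕ} (P : Finpartition (Finset.univ : Finset (Fin n)))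
    (i j : Fin n) : SameBlock P i j ↔ j ∈ P.part i := by
  rw [sameBlock_iff_part_eq, P.mem_part_iff_part_eq_part (mem_univ j) (mem_univ i)]
  exact eq_comm

lemma parts_eq_image {n : ℕ} (P : Finpartition (Finset.univ : Finset (Fin n))) :
    P.parts = univ.image P.part := by
  ext t
  constructor
  · intro ht
    obtain ⟨x, hx⟩ := P.nonempty_of_mem_parts ht
    exact mem_image.2 ⟨x, mem_univ x, P.part_eq_of_mem ht hx⟩
  · intro ht
    obtain ⟨x, _, rfl⟩ := mem_image.1 ht
    exact P.part_mem.2 (mem_univ x)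

lemma finpartition_ext {n : ℕ} {P Q : Finpartition (Finset.univ : Finset (Fin n))}
    (h : ∀ i j, SameBlock P i j ↔ SameBlock Q i j) : P = Q := by
  have hpart : P.part = Q.part := by
    funext i; ext j
    rw [← sameBlock_iff_mem_part, ← sameBlock_iff_mem_part, h]
  have hparts : P.parts = Q.parts := by
    rw [parts_eq_image, parts_eq_image, hpart]
  cases P; cases Q
  simpa using hparts

/-! ### The encoding type -/

/-- The initial segment `{i < a}` of `Fin n`. -/
def Aset (n a : ℕ) : Finset (Fin n) := univ.filter fun i => (i : ℕ) < a

/-- The final segment `{i ≥ a}` of `Fin n`. -/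
def Bset (n a : ℕ) : Finset (Fin n) := univ.filter fun i => a ≤ (i : ℕ)

/-- Encoding of an avoiding 2-colored set partition: a cut point `a`, the set `S` of matched
elements below the cut, and an injection sending matched elements to their partners above. -/
abbrev DT (n : ℕ) : Type :=
  Σ a : Fin (n + 1), Σ S : ↥((Aset n a.1).powerset), (↥(S.1) ↪ ↥(Bset n a.1))

/-- The color function determined by a cut point. -/
def dcol (n a : ℕ) : Fin n → Fin 2 := fun i => if (i : ℕ) < a then 1 else 0

/-- `j` is the partner of `i` according to the matching data. -/
def dpair {n : ℕ} (d : DT n) (i j : Fin n) : Prop :=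
  ∃ p : ↥(d.2.1.1), (p : Fin n) = i ∧ ((d.2.2 p : ↥(Bset n d.1.1)) : Fin n) = j

instance {n : ℕ} (d : DT n) (i j : Fin n) : Decidable (dpair d i j) := by
  unfold dpair; infer_instance

/-- The same-block relation determined by the matching data. -/
def drel {n : ℕ} (d : DT n) (i j : Fin n) : Prop := i = j ∨ dpair d i j ∨ dpair d j i

instance {n : ℕ} (d : DT n) (i j : Fin n) : Decidable (drel d i j) := by
  unfold drel; infer_instance

lemma dpair_lt {n : ℕ} {d : DT n} {i j : Fin n} (h : dpair d i j) :
    (i : ℕ) < d.1.1 ∧ d.1.1 ≤ (j : ℕ) := by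
  obtain ⟨p, rfl, rfl⟩ := h
  constructor
  · have h1 : (p : Fin n) ∈ Aset n d.1.1 := mem_powerset.1 d.2.1.2 p.2
    simpa [Aset] using h1
  · have h2 := (d.2.2 p).2
    exact (mem_filter.1 h2).2

lemma dpair_right_unique {n : ℕ} {d : DT n} {i j j' : Fin n} (h : dpair d i j)
    (h' : dpair d i j') : j = j' := by
  obtain ⟨p, hp, rfl⟩ := h
  obtain ⟨q, hq, rfl⟩ := h'
  have : p = q := Subtype.ext (hp.trans hq.symm)
  rw [this]

lemma dpair_left_unique {n : ℕ} {d : DT n} {i i' j : Fin n} (h : dpair d i j)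
    (h' : dpair d i' j) : i = i' := by
  obtain ⟨p, rfl, hp⟩ := h
  obtain ⟨q, rfl, hq⟩ := h'
  have : d.2.2 p = d.2.2 q := Subtype.ext (hp.trans hq.symm)
  have := d.2.2.injective this
  rw [this]

/-- The setoid of the same-block relation. -/
def dsetoid {n : ℕ} (d : DT n) : Setoid (Fin n) where
  r := drel d
  iseqv := by
    constructor
    · exact fun i => Or.inl rfl
    · rintro i j (rfl | h | h)
      · exact Or.inl rfl
      · exact Or.inr (Or.inr h)
      · exact Or.inr (Or.inl h)
    · rintro i j k (rfl | h | h) (rfl | h' | h')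
      · exact Or.inl rfl
      · exact Or.inr (Or.inl h')
      · exact Or.inr (Or.inr h')
      · exact Or.inr (Or.inl h)
      · exact absurd ((dpair_lt h).2.trans_lt (dpair_lt h').1) (lt_irrefl _)
      · exact Or.inl (dpair_left_unique h h')
      · exact Or.inr (Or.inr h)
      · exact Or.inl (dpair_right_unique h h')
      · exact absurd ((dpair_lt h').2.trans_lt (dpair_lt h).1) (lt_irrefl _)

instance {n : ℕ} (d : DT n) : DecidableRel (dsetoid d).r := fun i j => by
  show Decidable (drel d i j); infer_instance

/-- The partition determined by the matching data. -/
def dpart {n : ℕ} (d : DT n) : Finpartition (Finset.univ : Finset (Fin n)) :=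
  Finpartition.ofSetoid (dsetoid d)

/-- The 2-colored set partition determined by the matching data. -/
def toCPart {n : ℕ} (d : DT n) : CPart n 2 := ⟨dpart d, dcol n d.1.1⟩

lemma sameBlock_toCPart {n : ℕ} (d : DT n) (i j : Fin n) :
    SameBlock (dpart d) i j ↔ drel d i j :=
  (sameBlock_iff_mem_part _ i j).trans Finpartition.mem_part_ofSetoid_iff_rel

lemma dcol_lt {n a : ℕ} {i j : Fin n} (h : dcol n a i < dcol n a j) :
    a ≤ (i : ℕ) ∧ (j : ℕ) < a := by
  unfold dcol at h
  by_cases hi : (i : ℕ) < a <;> by_cases hj : (j : ℕ) < a <;>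
    simp [hi, hj] at h ⊢ <;> omega

lemma toCPart_avoid {n : ℕ} (d : DT n) :
    ¬ Has11 (toCPart d) ∧ ¬ Has112 (toCPart d) ∧ ¬ Has1122 (toCPart d) := by
  refine ⟨?_, ?_, ?_⟩
  · rintro ⟨i, j, hij, hs, hcol⟩
    have hrel : drel d i j := (sameBlock_toCPart d i j).1 hs
    rcases hrel with rfl | hp | hp
    · exact lt_irrefl _ hij
    · obtain ⟨h1, h2⟩ := dpair_lt hp
      unfold toCPart dcol at hcol
      simp only [h1, if_pos, if_neg (not_lt.2 h2)] at hcol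
      exact absurd hcol (by decide)
    · obtain ⟨h1, h2⟩ := dpair_lt hp
      have := Fin.lt_iff_val_lt_val.1 hij
      omega
  · rintro ⟨i, j, hij, _, hcol⟩
    obtain ⟨h1, h2⟩ := dcol_lt hcol
    have := Fin.lt_iff_val_lt_val.1 hij
    omega
  · rintro ⟨i, j, hij, _, hcol⟩
    obtain ⟨h1, h2⟩ := dcol_lt hcol
    have := Fin.lt_iff_val_lt_val.1 hij
    omega

/-- The map from encodings to avoiding 2-colored set partitions. -/
def F (n : ℕ) (d : DT n) : {σ : CPart n 2 // ¬ Has11 σ ∧ ¬ Has112 σ ∧ ¬ Has1122 σ} :=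
  ⟨toCPart d, toCPart_avoid d⟩

lemma mem_S_iff {n : ℕ} (d : DT n) (i : Fin n) :
    i ∈ d.2.1.1 ↔ ((i : ℕ) < d.1.1 ∧ ∃ j, j ≠ i ∧ drel d i j) := by
  constructor
  · intro hi
    have h1 : dpair d i ((d.2.2 ⟨i, hi⟩ : ↥(Bset n d.1.1)) : Fin n) := ⟨⟨i, hi⟩, rfl, rfl⟩
    obtain ⟨ha, hb⟩ := dpair_lt h1
    refine ⟨ha, _, ?_, Or.inr (Or.inl h1)⟩
    intro hji
    rw [hji] at hb
    omega
  · rintro ⟨hia, j, hji, (rfl | hp | hp)⟩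
    · exact absurd rfl hji
    · obtain ⟨p, hpi, _⟩ := hp
      exact hpi ▸ p.2
    · have := (dpair_lt hp).2
      omega

lemma F_injective (n : ℕ) : Function.Injective (F n) := by
  rintro ⟨a, S, f⟩ ⟨a', S', f'⟩ h
  simp only [F, Subtype.mk.injEq, toCPart, CPart.mk.injEq] at h
  obtain ⟨hpart, hcol⟩ := h
  -- the cut points agree
  have ha : a = a' := by
    apply Fin.ext
    by_contra hne
    rcases Nat.lt_or_ge a.1 a'.1 with hlt | hge
    · have hn : a.1 < n := lt_of_lt_of_le hlt (Nat.lt_succ_iff.mp a'.2)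
      have h0 := congrFun hcol ⟨a.1, hn⟩
      unfold dcol at h0
      simp only [lt_irrefl, if_neg] at h0
      rw [if_pos hlt] at h0
      exact absurd h0 (by decide)
    · have hlt : a'.1 < a.1 := by omega
      have hn : a'.1 < n := lt_of_lt_of_le hlt (Nat.lt_succ_iff.mp a.2)
      have h0 := congrFun hcol ⟨a'.1, hn⟩
      unfold dcol at h0
      rw [if_pos hlt, if_neg (lt_irrefl _)] at h0
      exact absurd h0 (by decide)
  subst ha
  -- the relations agree
  have hrel : ∀ i j, drel ⟨a, S, f⟩ i j ↔ drel ⟨a, S', f'⟩ i j := by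
    intro i j
    rw [← sameBlock_toCPart, ← sameBlock_toCPart]
    show SameBlock (dpart ⟨a, S, f⟩) i j ↔ _
    rw [hpart]
  -- the matched sets agree
  have hS : S = S' := by
    apply Subtype.ext
    ext i
    rw [show S.1 = (⟨a, S, f⟩ : DT n).2.1.1 from rfl, mem_S_iff,
      show S'.1 = (⟨a, S', f'⟩ : DT n).2.1.1 from rfl, mem_S_iff]
    constructor
    · rintro ⟨h1, j, h2, h3⟩
      exact ⟨h1, j, h2, (hrel i j).1 h3⟩
    · rintro ⟨h1, j, h2, h3⟩
      exact ⟨h1, j, h2, (hrel i j).2 h3⟩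
  subst hS
  -- the matchings agree
  have hf : f = f' := by
    apply DFunLike.ext
    intro p
    apply Subtype.ext
    have h1 : dpair (⟨a, S, f⟩ : DT n) p.1 ((f p : ↥(Bset n a.1)) : Fin n) := ⟨p, rfl, rfl⟩
    have h2 : dpair (⟨a, S, f'⟩ : DT n) p.1 ((f' p : ↥(Bset n a.1)) : Fin n) := ⟨p, rfl, rfl⟩
    have h3 : drel (⟨a, S, f⟩ : DT n) p.1 ((f' p : ↥(Bset n a.1)) : Fin n) :=
      (hrel _ _).2 (Or.inr (Or.inl h2))
    rcases h3 with heq | hp | hp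
    · exfalso
      have hb := (f' p).2
      have hb' : a.1 ≤ ((f' p : ↥(Bset n a.1)) : Fin n) := (mem_filter.1 hb).2
      have hs : (p : Fin n) ∈ Aset n a.1 := mem_powerset.1 S.2 p.2
      have hs' : ((p : Fin n) : ℕ) < a.1 := (mem_filter.1 hs).2
      rw [← heq] at hb'
      omega
    · exact (dpair_right_unique h1 hp).symm ▸ (dpair_right_unique hp h1) ▸ rfl
    · exfalso
      have h4 : a.1 ≤ ((p : Fin n) : ℕ) := (dpair_lt hp).2
      have hs : (p : Fin n) ∈ Aset n a.1 := mem_powerset.1 S.2 p.2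
      have hs' : ((p : Fin n) : ℕ) < a.1 := (mem_filter.1 hs).2
      omega
  rw [hf]

/-! ### Structure of avoiding colored partitions -/

section Sigma
variable {n : ℕ} {σ : CPart n 2}

lemma col_anti (h112 : ¬ Has112 σ) (h1122 : ¬ Has1122 σ) {i j : Fin n} (hij : i < j)
    (hj : σ.col j = 1) : σ.col i = 1 := by
  rcases fin2_cases (σ.col i) with h0 | h1
  · exfalso
    have hlt : σ.col i < σ.col j := by rw [h0, hj]; decide
    by_cases hs : SameBlock σ.part i j
    · exact h112 ⟨i, j, hij, hs, hlt⟩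
    · exact h1122 ⟨i, j, hij, hs, hlt⟩
  · exact h1

lemma claimA (h112 : ¬ Has112 σ) (h1122 : ¬ Has1122 σ) (i : Fin n) :
    σ.col i = 1 ↔ (i : ℕ) < #(univ.filter fun j => σ.col j = 1) := by
  set G : Finset (Fin n) := univ.filter fun j => σ.col j = 1 with hG
  constructor
  · intro hi
    have hsub : Finset.Iic i ⊆ G := by
      intro j hj
      rw [Finset.mem_Iic] at hj
      rcases eq_or_lt_of_le hj with rfl | hlt
      · simp [hG, hi]
      · simp only [hG, mem_filter, mem_univ, true_and]
        exact col_anti h112 h1122 hlt hi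
    have := Finset.card_le_card hsub
    rw [Fin.card_Iic] at this
    omega
  · intro hi
    by_contra hcol
    have hsub : G ⊆ Finset.Iio i := by
      intro j hj
      rw [Finset.mem_Iio]
      simp only [hG, mem_filter, mem_univ, true_and] at hj
      rcases lt_trichotomy j i with h | rfl | h
      · exact h
      · exact absurd hj hcol
      · exact absurd (col_anti h112 h1122 h hj) hcol
    have := Finset.card_le_card hsub
    rw [Fin.card_Iio] at this
    omega

lemma block_cols (h11 : ¬ Has11 σ) (h112 : ¬ Has112 σ) {i j : Fin n} (hij : i < j)
    (hs : SameBlock σ.part i j) : σ.col i = 1 ∧ σ.col j = 0 := by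
  have hne : σ.col i ≠ σ.col j := fun h => h11 ⟨i, j, hij, hs, h⟩
  have hnlt : ¬ σ.col i < σ.col j := fun h => h112 ⟨i, j, hij, hs, h⟩
  omega

lemma partner_unique (h11 : ¬ Has11 σ) {i j k : Fin n} (hs : SameBlock σ.part i j)
    (hs' : SameBlock σ.part i k) (hj : j ≠ i) (hk : k ≠ i) : j = k := by
  by_contra hjk
  have hcolj : σ.col j ≠ σ.col i := by
    rcases lt_trichotomy i j with h | rfl | h
    · exact fun hc => h11 ⟨i, j, h, hs, hc.symm⟩
    · exact absurd rfl hj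
    · exact fun hc => h11 ⟨j, i, h, sameBlock_symm hs, hc⟩
  have hcolk : σ.col k ≠ σ.col i := by
    rcases lt_trichotomy i k with h | rfl | h
    · exact fun hc => h11 ⟨i, k, h, hs', hc.symm⟩
    · exact absurd rfl hk
    · exact fun hc => h11 ⟨k, i, h, sameBlock_symm hs', hc⟩
  have hcoljk : σ.col j = σ.col k := fin2_ne_ne hcolj hcolk
  have hblk : SameBlock σ.part j k := sameBlock_trans (sameBlock_symm hs) hs'
  rcases lt_trichotomy j k with h | rfl | h
  · exact h11 ⟨j, k, h, hblk, hcoljk⟩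
  · exact absurd rfl hjk
  · exact h11 ⟨k, j, h, sameBlock_symm hblk, hcoljk.symm⟩

end Sigma

lemma F_surjective (n : ℕ) : Function.Surjective (F n) := by
  classical
  rintro ⟨⟨P, c⟩, h11, h112, h1122⟩
  set σ : CPart n 2 := ⟨P, c⟩ with hσ
  set a : ℕ := #(univ.filter fun j => σ.col j = 1) with ha_def
  have haN : a ≤ n := by
    have := Finset.card_filter_le (univ : Finset (Fin n)) (fun j => σ.col j = 1)
    simpa using this
  have hA := claimA (σ := σ) h112 h1122
  set S : Finset (Fin n) :=
    univ.filter (fun i => (i : ℕ) < a ∧ ∃ j, j ≠ i ∧ SameBlock σ.part i j) with hS_def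
  have hSsub : S ∈ (Aset n a).powerset := by
    rw [mem_powerset]
    intro i hi
    simp only [hS_def, mem_filter, mem_univ, true_and] at hi
    simp only [Aset, mem_filter, mem_univ, true_and]
    exact hi.1
  have hpartner : ∀ p : ↥S, ∃ j, j ≠ (p : Fin n) ∧ SameBlock σ.part (p : Fin n) j := by
    intro p
    have := p.2
    simp only [hS_def, mem_filter, mem_univ, true_and] at this
    exact this.2
  choose g hg1 hg2 using hpartner
  have hSlt : ∀ p : ↥S, ((p : Fin n) : ℕ) < a := by
    intro p
    have := p.2
    simp only [hS_def, mem_filter, mem_univ, true_and] at this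
    exact this.1
  have hgB : ∀ p : ↥S, a ≤ ((g p : Fin n) : ℕ) := by
    intro p
    have hci : σ.col (p : Fin n) = 1 := (hA _).2 (hSlt p)
    rcases lt_trichotomy (g p) (p : Fin n) with h | h | h
    · exfalso
      have := block_cols h11 h112 h (sameBlock_symm (hg2 p))
      rw [hci] at this
      exact absurd this.2 (by decide)
    · exact absurd h (hg1 p)
    · have := block_cols h11 h112 h (hg2 p)
      have hcj : σ.col (g p) = 0 := this.2
      by_contra hlt
      rw [not_le] at hlt
      have := (hA (g p)).2 hlt
      rw [hcj] at this
      exact absurd this (by decide)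
  have hgB' : ∀ p : ↥S, g p ∈ Bset n a := by
    intro p
    simp only [Bset, mem_filter, mem_univ, true_and]
    exact hgB p
  have hginj : Function.Injective (fun p : ↥S => g p) := by
    intro p q hpq
    simp only at hpq
    apply Subtype.ext
    by_contra hne
    have h1 : SameBlock σ.part (g p) (p : Fin n) := sameBlock_symm (hg2 p)
    have h2 : SameBlock σ.part (g p) (q : Fin n) := by
      rw [hpq]; exact sameBlock_symm (hg2 q)
    have hp' : (p : Fin n) ≠ g p := fun h => (hg1 p) h.symm
    have hq' : (q : Fin n) ≠ g p := by
      rw [hpq]; exact fun h => (hg1 q) h.symm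
    exact hne (partner_unique h11 h1 h2 hp' hq')
  set d : DT n := ⟨⟨a, Nat.lt_succ_of_le haN⟩, ⟨S, hSsub⟩,
    ⟨fun p => ⟨g p, hgB' p⟩, fun p q h => hginj (congrArg Subtype.val h)⟩⟩ with hd
  refine ⟨d, ?_⟩
  apply Subtype.ext
  show toCPart d = σ
  have hcol : dcol n a = σ.col := by
    funext i
    unfold dcol
    by_cases h : (i : ℕ) < a
    · rw [if_pos h, ((hA i).2 h).symm]
    · rw [if_neg h]
      rcases fin2_cases (σ.col i) with h0 | h1
      · rw [h0]
      · exact absurd ((hA i).1 h1) h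
  have hpart : dpart d = σ.part := by
    apply finpartition_ext
    intro i j
    rw [sameBlock_toCPart]
    constructor
    · rintro (rfl | hp | hp)
      · exact sameBlock_refl _ _
      · obtain ⟨p, rfl, rfl⟩ := hp
        exact hg2 p
      · obtain ⟨p, rfl, rfl⟩ := hp
        exact sameBlock_symm (hg2 p)
    · intro hs
      rcases lt_trichotomy i j with h | rfl | h
      · have hbc := block_cols h11 h112 h hs
        have hia : (i : ℕ) < a := (hA i).1 hbc.1
        have hja : ¬ (j : ℕ) < a := fun hja => by
          have := (hA j).2 hja
          rw [hbc.2] at this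
          exact absurd this (by decide)
        have hiS : i ∈ S := by
          simp only [hS_def, mem_filter, mem_univ, true_and]
          exact ⟨hia, j, fun hj => by subst hj; exact lt_irrefl _ h, hs⟩
        have hj : g ⟨i, hiS⟩ = j := by
          apply partner_unique h11 (hg2 ⟨i, hiS⟩) hs (hg1 ⟨i, hiS⟩)
          intro hji
          subst hji
          exact lt_irrefl _ h
        refine Or.inr (Or.inl ⟨⟨i, hiS⟩, rfl, ?_⟩)
        exact congrArg Subtype.val (congrArg _ rfl) |>.trans hj
      · exact Or.inl rfl
      · have hs' := sameBlock_symm hs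
        have hbc := block_cols h11 h112 h hs'
        have hja : (j : ℕ) < a := (hA j).1 hbc.1
        have hjS : j ∈ S := by
          simp only [hS_def, mem_filter, mem_univ, true_and]
          exact ⟨hja, i, fun hi => by subst hi; exact lt_irrefl _ h, hs'⟩
        have hi : g ⟨j, hjS⟩ = i := by
          apply partner_unique h11 (hg2 ⟨j, hjS⟩) hs' (hg1 ⟨j, hjS⟩)
          intro hij
          subst hij
          exact lt_irrefl _ h
        exact Or.inr (Or.inr ⟨⟨j, hjS⟩, rfl, hi⟩)
  show (⟨dpart d, dcol n a⟩ : CPart n 2) = σ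
  rw [hpart, hcol]

/-! ### Counting -/

lemma card_Aset {n a : ℕ} (ha : a ≤ n) : #(Aset n a) = a := by
  have hlt : ∀ m ∈ range a, m < n := fun m hm => by rw [mem_range] at hm; omega
  have key : Aset n a = (range a).attachFin hlt := by
    ext i
    rw [Finset.mem_attachFin, mem_range]
    simp [Aset]
  rw [key, Finset.card_attachFin, Finset.card_range]

lemma card_Bset {n a : ℕ} (ha : a ≤ n) : #(Bset n a) = n - a := by
  have h1 : Bset n a = (univ : Finset (Fin n)).filter (fun i : Fin n => ¬ ((i : ℕ) < a)) := by
    unfold Bset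
    apply filter_congr
    intro i _
    rw [not_lt]
  have h2 := Finset.card_filter_add_card_filter_not
    (s := (univ : Finset (Fin n))) (p := fun i : Fin n => (i : ℕ) < a)
  rw [card_univ, Fintype.card_fin] at h2
  have h3 : #(Aset n a) = a := card_Aset ha
  unfold Aset at h3
  rw [h1]
  omega

lemma card_DT (n : ℕ) : Fintype.card (DT n) =
    ∑ a ∈ range (n + 1), ∑ m ∈ range (a + 1), a.choose m * (n - a).descFactorial m := by
  classical
  rw [Fintype.card_sigma]
  rw [← Fin.sum_univ_eq_sum_range
    (fun a => ∑ m ∈ range (a + 1), a.choose m * (n - a).descFactorial m)]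
  apply Finset.sum_congr rfl
  intro a _
  rw [Fintype.card_sigma]
  have ha : a.1 ≤ n := Nat.lt_succ_iff.mp a.2
  have hstep : ∀ S : ↥((Aset n a.1).powerset),
      Fintype.card (↥(S.1) ↪ ↥(Bset n a.1)) = (n - a.1).descFactorial S.1.card := by
    intro S
    rw [Fintype.card_embedding_eq, Fintype.card_coe, Fintype.card_coe, card_Bset ha]
  rw [Finset.sum_congr rfl (fun S _ => hstep S)]
  rw [Finset.sum_coe_sort ((Aset n a.1).powerset) (fun S => (n - a.1).descFactorial S.card)]
  rw [Finset.sum_powerset_apply_card (fun m => (n - a.1).descFactorial m), card_Aset ha]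
  apply Finset.sum_congr rfl
  intro m _
  rw [smul_eq_mul]

/-! ### Arithmetic identities -/

lemma sum_choose_mul_choose (j : ℕ) : ∀ (N i : ℕ),
    ∑ a ∈ range (N + 1), a.choose i * (N - a).choose j = (N + 1).choose (i + j + 1) := by
  intro N
  induction N with
  | zero =>
    intro i
    cases i with
    | zero =>
      rw [Finset.sum_range_one]
      cases j with
      | zero => rfl
      | succ j =>
        rw [Nat.choose_zero_succ, mul_zero, Nat.choose_eq_zero_of_lt (by omega)]
    | succ i =>
      rw [Finset.sum_range_one, Nat.choose_zero_succ, zero_mul,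
        Nat.choose_eq_zero_of_lt (by omega)]
  | succ N ih =>
    intro i
    rw [Finset.sum_range_succ']
    have hshift : ∀ b : ℕ, N + 1 - (b + 1) = N - b := fun b => by omega
    cases i with
    | zero =>
      simp only [Nat.choose_zero_right, one_mul, hshift, Nat.sub_zero, Nat.zero_add]
      have h1 := ih 0
      simp only [Nat.choose_zero_right, one_mul, Nat.zero_add] at h1
      rw [h1, Nat.choose_succ_succ (N + 1) j]
      simp only [Nat.succ_eq_add_one]
      omega
    | succ i =>
      have hkey : ∀ b : ℕ, (b + 1).choose (i + 1) * ((N + 1 - (b + 1)).choose j)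
          = b.choose i * ((N - b).choose j) + b.choose (i + 1) * ((N - b).choose j) := by
        intro b
        rw [hshift b, Nat.choose_succ_succ, add_mul]
      rw [Finset.sum_congr rfl (fun b _ => hkey b), Finset.sum_add_distrib, ih i, ih (i + 1),
        Nat.choose_zero_succ, zero_mul, add_zero]
      rw [show i + 1 + j + 1 = (i + j + 1) + 1 from by omega]
      rw [Nat.choose_succ_succ (N + 1) (i + j + 1)]

lemma sum_range_double (f : ℕ → ℕ) : ∀ N, ∑ k ∈ range (2 * N), f k
    = ∑ m ∈ range N, (f (2 * m) + f (2 * m + 1)) := by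
  intro N
  induction N with
  | zero => simp
  | succ N ih =>
    rw [show 2 * (N + 1) = (2 * N + 1) + 1 from by ring, Finset.sum_range_succ,
      Finset.sum_range_succ, ih, Finset.sum_range_succ]
    ring

lemma rhs_eq (n : ℕ) : ∑ k ∈ range (n + 1), n.choose k * Nat.factorial (k / 2)
    = ∑ m ∈ range (n + 1), (n + 1).choose (2 * m + 1) * Nat.factorial m := by
  have hext : ∑ k ∈ range (n + 1), n.choose k * Nat.factorial (k / 2)
      = ∑ k ∈ range (2 * (n + 1)), n.choose k * Nat.factorial (k / 2) := by
    apply Finset.sum_subset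
    · apply Finset.range_subset_range.2
      omega
    · intro k _ hk
      rw [mem_range, not_lt] at hk
      rw [Nat.choose_eq_zero_of_lt (by omega), zero_mul]
  rw [hext, sum_range_double]
  apply Finset.sum_congr rfl
  intro m _
  have h1 : 2 * m / 2 = m := by omega
  have h2 : (2 * m + 1) / 2 = m := by omega
  rw [h1, h2, Nat.choose_succ_succ (n) (2 * m)]
  ring

lemma lhs_eq (n : ℕ) :
    ∑ a ∈ range (n + 1), ∑ m ∈ range (a + 1), a.choose m * (n - a).descFactorial m
      = ∑ m ∈ range (n + 1), (n + 1).choose (2 * m + 1) * Nat.factorial m := by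
  have step1 : ∀ a ∈ range (n + 1),
      ∑ m ∈ range (a + 1), a.choose m * (n - a).descFactorial m
        = ∑ m ∈ range (n + 1), a.choose m * (n - a).descFactorial m := by
    intro a ha
    rw [mem_range] at ha
    apply Finset.sum_subset
    · apply Finset.range_subset_range.2
      omega
    · intro m _ hm
      rw [mem_range, not_lt] at hm
      rw [Nat.choose_eq_zero_of_lt (by omega), zero_mul]
  rw [Finset.sum_congr rfl step1, Finset.sum_comm]
  apply Finset.sum_congr rfl
  intro m _
  have hterm : ∀ a : ℕ, a.choose m * (n - a).descFactorial m
      = a.choose m * (n - a).choose m * Nat.factorial m := by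
    intro a
    rw [Nat.descFactorial_eq_factorial_mul_choose]
    ring
  rw [Finset.sum_congr rfl (fun a _ => hterm a), ← Finset.sum_mul, sum_choose_mul_choose m n m]
  congr 2
  omega

end Stmt11Aux

theorem stmt11 : ∀ n : ℕ, 1 ≤ n →
    Nat.card {σ : CPart n 2 // ¬ Has11 σ ∧ ¬ Has112 σ ∧ ¬ Has1122 σ} =
      ∑ k ∈ Finset.range (n + 1), n.choose k * Nat.factorial (k / 2) := by
  intro n _
  have hbij : Function.Bijective (Stmt11Aux.F n) :=
    ⟨Stmt11Aux.F_injective n, Stmt11Aux.F_surjective n⟩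
  have h1 := Nat.card_eq_of_bijective (Stmt11Aux.F n) hbij
  rw [← h1, Nat.card_eq_fintype_card, Stmt11Aux.card_DT, Stmt11Aux.lhs_eq, ← Stmt11Aux.rhs_eq]
end

section
/- For n ≥ 1, the number of 2-colored set partitions of [n] avoiding the three patterns 1^1 1^2, 1^1 2^2, and 1^2 2^1 in the pattern sense equals 2·B(n) + n − 1, where B(n) is the n-th Bell number. -/
section Aux

lemma univ_ne_bot {n : ℕ} (hn : 1 ≤ n) : (Finset.univ : Finset (Fin n)) ≠ ⊥ := by
  have : Nonempty (Fin n) := ⟨⟨0, hn⟩⟩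
  simpa using (Finset.univ_nonempty (α := Fin n)).ne_empty

/-- The underlying colored partition of the bijection. -/
def gfun (n : ℕ) (hn : 1 ≤ n) :
    (Finpartition (Finset.univ : Finset (Fin n)) × Fin 2) ⊕ Fin (n - 1) → CPart n 2
  | .inl Pc => ⟨Pc.1, fun _ => Pc.2⟩
  | .inr k => ⟨Finpartition.indiscrete (univ_ne_bot hn),
      fun i => if (i : ℕ) ≤ (k : ℕ) then 1 else 0⟩

lemma gfun_good (n : ℕ) (hn : 1 ≤ n)
    (x : (Finpartition (Finset.univ : Finset (Fin n)) × Fin 2) ⊕ Fin (n - 1)) :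
    ¬ Has112 (gfun n hn x) ∧ ¬ Has1122 (gfun n hn x) ∧ ¬ Has1221 (gfun n hn x) := by
  match x with
  | .inl Pc =>
    refine ⟨?_, ?_, ?_⟩ <;>
      rintro ⟨i, j, hij, hb, hcol⟩ <;>
      exact absurd hcol (by simp [gfun])
  | .inr k =>
    have hsb : ∀ i j : Fin n, SameBlock (gfun n hn (.inr k)).part i j := by
      intro i j
      exact ⟨Finset.univ, by simp [gfun, Finpartition.indiscrete_parts], Finset.mem_univ _,
        Finset.mem_univ _⟩
    refine ⟨?_, ?_, ?_⟩
    · rintro ⟨i, j, hij, hb, hcol⟩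
      simp only [gfun] at hcol
      have hij' : (i : ℕ) < (j : ℕ) := hij
      split_ifs at hcol with h1 h2 h2 <;> omega
    · rintro ⟨i, j, hij, hb, hcol⟩
      exact hb (hsb i j)
    · rintro ⟨i, j, hij, hb, hcol⟩
      exact hb (hsb i j)

/-- The bijection itself. -/
def gsub (n : ℕ) (hn : 1 ≤ n) :
    (Finpartition (Finset.univ : Finset (Fin n)) × Fin 2) ⊕ Fin (n - 1) →
    {σ : CPart n 2 // ¬ Has112 σ ∧ ¬ Has1122 σ ∧ ¬ Has1221 σ} :=
  fun x => ⟨gfun n hn x, gfun_good n hn x⟩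

lemma gsub_injective (n : ℕ) (hn : 1 ≤ n) : Function.Injective (gsub n hn) := by
  intro a b hab
  have hab' : gfun n hn a = gfun n hn b := congrArg Subtype.val hab
  match a, b with
  | .inl ⟨P, c⟩, .inl ⟨P', c'⟩ =>
    simp only [gfun, CPart.mk.injEq] at hab'
    obtain ⟨hP, hc⟩ := hab'
    have : c = c' := congrFun hc ⟨0, hn⟩
    simp [hP, this]
  | .inl ⟨P, c⟩, .inr k =>
    exfalso
    simp only [gfun, CPart.mk.injEq] at hab'
    obtain ⟨-, hc⟩ := hab'
    have hk : (k : ℕ) < n - 1 := k.isLt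
    have h1 : c = (if (0 : ℕ) ≤ (k : ℕ) then (1 : Fin 2) else 0) := congrFun hc ⟨0, hn⟩
    have h2 : c = (if ((k : ℕ) + 1) ≤ (k : ℕ) then (1 : Fin 2) else 0) :=
      congrFun hc ⟨(k : ℕ) + 1, by omega⟩
    simp at h1 h2
    omega
  | .inr k, .inl ⟨P, c⟩ =>
    exfalso
    simp only [gfun, CPart.mk.injEq] at hab'
    obtain ⟨-, hc⟩ := hab'
    have hk : (k : ℕ) < n - 1 := k.isLt
    have h1 : (if (0 : ℕ) ≤ (k : ℕ) then (1 : Fin 2) else 0) = c := congrFun hc ⟨0, hn⟩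
    have h2 : (if ((k : ℕ) + 1) ≤ (k : ℕ) then (1 : Fin 2) else 0) = c :=
      congrFun hc ⟨(k : ℕ) + 1, by omega⟩
    simp at h1 h2
    omega
  | .inr k, .inr k' =>
    simp only [gfun, CPart.mk.injEq] at hab'
    obtain ⟨-, hc⟩ := hab'
    have hk : (k : ℕ) < n - 1 := k.isLt
    have hk' : (k' : ℕ) < n - 1 := k'.isLt
    have h1 := congrFun hc ⟨(k : ℕ), by omega⟩
    have h2 := congrFun hc ⟨(k' : ℕ), by omega⟩
    simp only at h1 h2
    congr 1
    ext
    split_ifs at h1 h2 <;> omega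

lemma gsub_surjective (n : ℕ) (hn : 1 ≤ n) : Function.Surjective (gsub n hn) := by
  rintro ⟨σ, h1, h2, h3⟩
  classical
  -- colors are equal across different blocks
  have hdiff : ∀ i j : Fin n, i < j → ¬ SameBlock σ.part i j → σ.col i = σ.col j := by
    intro i j hij hnb
    have ha : ¬ σ.col i < σ.col j := fun h => h2 ⟨i, j, hij, hnb, h⟩
    have hb : ¬ σ.col j < σ.col i := fun h => h3 ⟨i, j, hij, hnb, h⟩
    omega
  -- the coloring is antitone
  have hanti : ∀ i j : Fin n, i < j → σ.col j ≤ σ.col i := by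
    intro i j hij
    by_cases hb : SameBlock σ.part i j
    · exact not_lt.1 fun h => h1 ⟨i, j, hij, hb, h⟩
    · exact (hdiff i j hij hb).ge
  set z0 : Fin n := ⟨0, hn⟩ with hz0
  by_cases hc : ∀ i, σ.col i = σ.col z0
  · refine ⟨.inl (σ.part, σ.col z0), ?_⟩
    apply Subtype.ext
    show CPart.mk σ.part (fun _ => σ.col z0) = σ
    obtain ⟨P, col⟩ := σ
    simp only [CPart.mk.injEq, true_and]
    exact funext fun i => (hc i).symm
  · push_neg at hc
    obtain ⟨i0, hi0⟩ := hc
    have hz0lt : ∀ i : Fin n, i ≠ z0 → z0 < i := by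
      intro i hi
      have : (0 : ℕ) < (i : ℕ) := by
        rcases Nat.eq_zero_or_pos (i : ℕ) with h | h
        · exact absurd (Fin.ext h) hi
        · exact h
      exact this
    have hi0ne : i0 ≠ z0 := fun h => hi0 (by rw [h])
    have hle : σ.col i0 ≤ σ.col z0 := hanti z0 i0 (hz0lt i0 hi0ne)
    have hcz0 : σ.col z0 = 1 := by omega
    have hci0 : σ.col i0 = 0 := by omega
    -- the threshold
    have hSne : (Finset.univ.filter (fun i => σ.col i = 1)).Nonempty :=
      ⟨z0, by simp [hcz0]⟩
    set k0 : Fin n := (Finset.univ.filter (fun i => σ.col i = 1)).max' hSne with hk0def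
    have hk0col : σ.col k0 = 1 := by
      have := (Finset.univ.filter (fun i => σ.col i = 1)).max'_mem hSne
      simpa using this
    have hiff : ∀ i : Fin n, σ.col i = 1 ↔ (i : ℕ) ≤ (k0 : ℕ) := by
      intro i
      constructor
      · intro h
        exact Finset.le_max' _ i (by simp [h])
      · intro h
        rcases eq_or_lt_of_le h with h' | h'
        · rw [show i = k0 from Fin.ext h']; exact hk0col
        · have := hanti i k0 h'
          omega
    have hi0gt : (k0 : ℕ) < (i0 : ℕ) := by
      by_contra h
      have := (hiff i0).2 (by omega)
      omega
    have hk0lt : (k0 : ℕ) < n - 1 := by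
      have := i0.isLt
      omega
    -- everything is in one block
    obtain ⟨B, hB, hz0B⟩ := σ.part.exists_mem (Finset.mem_univ z0)
    have hsbB : ∀ x : Fin n, x ∈ B := by
      intro x
      by_cases hx : x = z0
      · rw [hx]; exact hz0B
      · have hz0x : z0 < x := hz0lt x hx
        by_cases hcx : σ.col x = 0
        · -- z0 and x have different colors, hence same block
          have hsb : SameBlock σ.part z0 x := by
            by_contra hnb
            have := hdiff z0 x hz0x hnb
            omega
          obtain ⟨b, hb, hz0b, hxb⟩ := hsb
          rwa [σ.part.eq_of_mem_parts hb hB hz0b hz0B] at hxb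
        · have hcx1 : σ.col x = 1 := by omega
          -- x < i0 since col x = 1 and col i0 = 0
          have hxi0 : x < i0 := by
            by_contra h
            push_neg at h
            rcases eq_or_lt_of_le h with h' | h'
            · rw [h'] at hci0; omega
            · have := hanti i0 x h'; omega
          have hsb1 : SameBlock σ.part x i0 := by
            by_contra hnb
            have := hdiff x i0 hxi0 hnb
            omega
          have hz0i0 : z0 < i0 := hz0lt i0 hi0ne
          have hsb2 : SameBlock σ.part z0 i0 := by
            by_contra hnb
            have := hdiff z0 i0 hz0i0 hnb
            omega
          obtain ⟨b1, hb1, hxb1, hi0b1⟩ := hsb1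
          obtain ⟨b2, hb2, hz0b2, hi0b2⟩ := hsb2
          have e2 : b2 = B := σ.part.eq_of_mem_parts hb2 hB hz0b2 hz0B
          have e1 : b1 = b2 := σ.part.eq_of_mem_parts hb1 hb2 hi0b1 hi0b2
          rw [e1, e2] at hxb1
          exact hxb1
    have hBuniv : B = Finset.univ := Finset.eq_univ_of_forall hsbB
    have hparts : σ.part.parts = {Finset.univ} := by
      ext t
      simp only [Finset.mem_singleton]
      constructor
      · intro ht
        obtain ⟨x, hx⟩ := σ.part.nonempty_of_mem_parts ht
        have := σ.part.eq_of_mem_parts ht hB hx (hsbB x)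
        rw [this, hBuniv]
      · rintro rfl
        rwa [hBuniv] at hB
    have hpart_eq : σ.part = Finpartition.indiscrete (univ_ne_bot hn) := by
      apply Finpartition.ext
      rw [hparts, Finpartition.indiscrete_parts]
    refine ⟨.inr ⟨(k0 : ℕ), hk0lt⟩, ?_⟩
    apply Subtype.ext
    show CPart.mk (Finpartition.indiscrete (univ_ne_bot hn))
        (fun i => if (i : ℕ) ≤ (k0 : ℕ) then 1 else 0) = σ
    obtain ⟨P, col⟩ := σ
    simp only [CPart.mk.injEq]
    constructor
    · exact hpart_eq.symm
    · funext i
      by_cases h : (i : ℕ) ≤ (k0 : ℕ)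
      · simp only [h, if_pos]
        exact ((hiff i).2 h).symm
      · simp only [h, if_neg, not_false_iff]
        have : ¬ col i = 1 := fun hh => h ((hiff i).1 hh)
        omega

end Aux

theorem stmt12 : ∀ n : ℕ, 1 ≤ n →
    Nat.card {σ : CPart n 2 // ¬ Has112 σ ∧ ¬ Has1122 σ ∧ ¬ Has1221 σ} = 2 * bell n + n - 1 := by
  intro n hn
  have hbij : Function.Bijective (gsub n hn) := ⟨gsub_injective n hn, gsub_surjective n hn⟩
  have hcard := Nat.card_eq_of_bijective _ hbij
  rw [← hcard, Nat.card_sum, Nat.card_prod]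
  have h1 : Nat.card (Fin 2) = 2 := by simp
  have h2 : Nat.card (Fin (n - 1)) = n - 1 := by simp
  rw [h1, h2]
  unfold bell
  omega
end

section
/- For n ≥ 1, the number of 2-colored set partitions of [n] avoiding the three patterns 1^1 1^2, 1^1 2^2, and 1^2 1^1 in the pattern sense equals the sum over i from 0 to n of B(i)·B(n−i), where B denotes the Bell numbers. -/
/-! ### Auxiliary infrastructure -/

open Finset

section Setoids

variable {α β : Type*}

/-- Transfer a setoid along an equivalence. -/
def setoidCongr (e : α ≃ β) : Setoid α ≃ Setoid β where
  toFun s := ⟨fun x y => s.r (e.symm x) (e.symm y),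
    ⟨fun _ => s.refl _, fun h => s.symm h, fun h h' => s.trans h h'⟩⟩
  invFun s := ⟨fun x y => s.r (e x) (e y),
    ⟨fun _ => s.refl _, fun h => s.symm h, fun h h' => s.trans h h'⟩⟩
  left_inv s := Setoid.ext fun x y => by
    change s.r (e.symm (e x)) (e.symm (e y)) ↔ s.r x y; simp
  right_inv s := Setoid.ext fun x y => by
    change s.r (e (e.symm x)) (e (e.symm y)) ↔ s.r x y; simp

section part
variable [Fintype α] [DecidableEq α]

lemma parts_eq_image_part (P : Finpartition (univ : Finset α)) :
    P.parts = univ.image P.part := by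
  ext t
  simp only [mem_image, mem_univ, true_and]
  constructor
  · intro ht
    obtain ⟨x, hx⟩ := P.nonempty_of_mem_parts ht
    exact ⟨x, P.part_eq_of_mem ht hx⟩
  · rintro ⟨x, rfl⟩
    exact P.part_mem.mpr (mem_univ x)

lemma part_eq_filter (P : Finpartition (univ : Finset α)) (x : α) :
    P.part x = univ.filter (fun y => P.part y = P.part x) := by
  ext y
  simp only [mem_filter, mem_univ, true_and]
  rw [P.mem_part_iff_part_eq_part (mem_univ y) (mem_univ x)]

/-- The setoid associated to a finpartition of `univ`. -/
def toSetoid (P : Finpartition (univ : Finset α)) : Setoid α :=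
  ⟨fun x y => P.part x = P.part y,
    ⟨fun _ => rfl, fun h => h.symm, fun h h' => h.trans h'⟩⟩

lemma sameBlock_iff_part_eq {n : ℕ} (P : Finpartition (univ : Finset (Fin n))) (x y : Fin n) :
    SameBlock P x y ↔ P.part x = P.part y := by
  constructor
  · rintro ⟨b, hb, hx, hy⟩
    rw [P.part_eq_of_mem hb hx, P.part_eq_of_mem hb hy]
  · intro h
    exact ⟨P.part x, P.part_mem.mpr (mem_univ x), P.mem_part (mem_univ x),
      h ▸ P.mem_part (mem_univ y)⟩

lemma toSetoid_injective :
    Function.Injective (toSetoid : Finpartition (univ : Finset α) → Setoid α) := by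
  intro P Q h
  ext1
  rw [parts_eq_image_part, parts_eq_image_part]
  have hpq : ∀ x y : α, (P.part y = P.part x) ↔ (Q.part y = Q.part x) := by
    intro x y
    exact Setoid.ext_iff.mp h y x
  apply Finset.image_congr
  intro x _
  rw [part_eq_filter, part_eq_filter Q]
  exact Finset.filter_congr fun y _ => by rw [hpq]

/-- The equivalence between finpartitions of `univ` and setoids. -/
noncomputable def partSetoidEquiv (α : Type*) [Fintype α] [DecidableEq α] :
    Finpartition (univ : Finset α) ≃ Setoid α := by
  classical
  refine Equiv.ofBijective toSetoid ⟨toSetoid_injective, fun s => ?_⟩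
  letI : DecidableRel s.r := Classical.decRel _
  refine ⟨Finpartition.ofSetoid s, Setoid.ext fun x y => ?_⟩
  show (Finpartition.ofSetoid s).part x = (Finpartition.ofSetoid s).part y ↔ s.r x y
  rw [← Finpartition.mem_part_iff_part_eq_part (P := Finpartition.ofSetoid s)
    (mem_univ x) (mem_univ y)]
  rw [Finpartition.mem_part_ofSetoid_iff_rel]
  exact ⟨fun h => s.symm h, fun h => s.symm h⟩

lemma partSetoidEquiv_apply (P : Finpartition (univ : Finset α)) :
    partSetoidEquiv α P = toSetoid P := rfl

end part

/-- The setoid on a sum with no cross relations coming from a pair of setoids. -/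
def pairSetoid (p : Setoid α) (q : Setoid β) : Setoid (α ⊕ β) where
  r x y := match x, y with
    | .inl a, .inl b => p.r a b
    | .inr a, .inr b => q.r a b
    | _, _ => False
  iseqv := by
    constructor
    · rintro (a | a)
      · exact p.refl a
      · exact q.refl a
    · rintro (a | a) (b | b) h
      · exact p.symm h
      · exact h.elim
      · exact h.elim
      · exact q.symm h
    · rintro (a | a) (b | b) (c | c) h h' <;> first
        | exact h.elim | exact h'.elim
        | exact p.trans h h' | exact q.trans h h'

/-- Setoids on a sum with no cross relations correspond to pairs of setoids. -/
def sumSetoidEquiv (α β : Type*) :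
    {s : Setoid (α ⊕ β) // ∀ a b, ¬ s.r (Sum.inl a) (Sum.inr b)} ≃ Setoid α × Setoid β where
  toFun s := (⟨fun x y => s.1.r (.inl x) (.inl y),
      ⟨fun _ => s.1.refl _, fun h => s.1.symm h, fun h h' => s.1.trans h h'⟩⟩,
    ⟨fun x y => s.1.r (.inr x) (.inr y),
      ⟨fun _ => s.1.refl _, fun h => s.1.symm h, fun h h' => s.1.trans h h'⟩⟩)
  invFun p := ⟨pairSetoid p.1 p.2, fun _ _ h => h⟩
  left_inv := by
    rintro ⟨s, hs⟩
    refine Subtype.ext (Setoid.ext fun x y => ?_)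
    rcases x with a | a <;> rcases y with b | b
    · exact Iff.rfl
    · exact iff_of_false (fun h => h) (hs a b)
    · exact iff_of_false (fun h => h) (fun h => hs b a (s.symm h))
    · exact Iff.rfl
  right_inv p := rfl

end Setoids

section finSplit
variable {n i : ℕ}

/-- The splitting of `Fin n` at position `i`. -/
def finSplit (h : i ≤ n) : Fin n ≃ Fin i ⊕ Fin (n - i) :=
  (finCongr (by omega : n = i + (n - i))).trans finSumFinEquiv.symm

lemma finSplit_symm_inl (h : i ≤ n) (a : Fin i) : ((finSplit h).symm (Sum.inl a) : ℕ) = a := by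
  simp [finSplit, finSumFinEquiv_apply_left]

lemma finSplit_symm_inr (h : i ≤ n) (b : Fin (n - i)) :
    ((finSplit h).symm (Sum.inr b) : ℕ) = i + b := by
  simp [finSplit, finSumFinEquiv_apply_right]

end finSplit

/-- `P` splits at `i`: no block contains elements both below and at-or-above `i`. -/
def SplitAt {n : ℕ} (i : ℕ) (P : Finpartition (Finset.univ : Finset (Fin n))) : Prop :=
  ∀ x y : Fin n, (x : ℕ) < i → i ≤ (y : ℕ) → ¬ SameBlock P x y

instance finpartitionFinite (m : ℕ) : Finite (Finpartition (Finset.univ : Finset (Fin m))) :=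
  Finite.of_injective Finpartition.parts fun _ _ h => Finpartition.ext h

lemma bell_eq_card_setoid (m : ℕ) : bell m = Nat.card (Setoid (Fin m)) :=
  Nat.card_congr (partSetoidEquiv (Fin m))

/-- Counting the finpartitions which split at `i`. -/
lemma card_splitAt {n i : ℕ} (h : i ≤ n) :
    Nat.card {P : Finpartition (Finset.univ : Finset (Fin n)) // SplitAt i P} =
      bell i * bell (n - i) := by
  have e1 : {P : Finpartition (Finset.univ : Finset (Fin n)) // SplitAt i P} ≃
      {s : Setoid (Fin n) // ∀ x y : Fin n, (x : ℕ) < i → i ≤ (y : ℕ) → ¬ s.r x y} := by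
    refine Equiv.subtypeEquiv (partSetoidEquiv (Fin n)) fun P => ?_
    unfold SplitAt
    constructor
    · intro hP x y hx hy hr
      exact hP x y hx hy ((sameBlock_iff_part_eq P x y).mpr hr)
    · intro hP x y hx hy hb
      exact hP x y hx hy ((sameBlock_iff_part_eq P x y).mp hb)
  have e2 : {s : Setoid (Fin n) // ∀ x y : Fin n, (x : ℕ) < i → i ≤ (y : ℕ) → ¬ s.r x y} ≃
      {t : Setoid (Fin i ⊕ Fin (n - i)) // ∀ a b, ¬ t.r (Sum.inl a) (Sum.inr b)} := by
    refine Equiv.subtypeEquiv (setoidCongr (finSplit h)) fun s => ?_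
    constructor
    · intro hs a b
      refine hs _ _ ?_ ?_
      · rw [finSplit_symm_inl]; exact a.isLt
      · rw [finSplit_symm_inr]; omega
    · intro hs x y hx hy hr
      have hb : (y : ℕ) - i < n - i := by omega
      refine hs ⟨(x : ℕ), hx⟩ ⟨(y : ℕ) - i, hb⟩ ?_
      show s.r ((finSplit h).symm (Sum.inl _)) ((finSplit h).symm (Sum.inr _))
      have h1 : (finSplit h).symm (Sum.inl (⟨(x : ℕ), hx⟩ : Fin i)) = x :=
        Fin.ext (finSplit_symm_inl h _)
      have h2 : (finSplit h).symm (Sum.inr (⟨(y : ℕ) - i, hb⟩ : Fin (n - i))) = y := by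
        refine Fin.ext ?_
        rw [finSplit_symm_inr h]
        simp
        omega
      rw [h1, h2]
      exact hr
  rw [Nat.card_congr (e1.trans (e2.trans (sumSetoidEquiv _ _))), Nat.card_prod,
    bell_eq_card_setoid, bell_eq_card_setoid]

section main

variable {n : ℕ}

/-- The number of elements colored `1`. -/
def tcard (σ : CPart n 2) : ℕ := (Finset.univ.filter fun x => σ.col x = 1).card

lemma tcard_le (σ : CPart n 2) : tcard σ ≤ n := by
  have := Finset.card_filter_le (Finset.univ : Finset (Fin n)) (fun x => σ.col x = 1)
  simpa [tcard] using this

lemma col_anti (σ : CPart n 2) (h1 : ¬ Has112 σ) (h2 : ¬ Has1122 σ) :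
    ∀ x y : Fin n, x < y → σ.col y ≤ σ.col x := by
  intro x y hxy
  by_contra hc
  push_neg at hc
  rcases Classical.em (SameBlock σ.part x y) with hb | hb
  · exact h1 ⟨x, y, hxy, hb, hc⟩
  · exact h2 ⟨x, y, hxy, hb, hc⟩

lemma col_down (σ : CPart n 2) (h1 : ¬ Has112 σ) (h2 : ¬ Has1122 σ)
    {x y : Fin n} (hxy : x ≤ y) (hy : σ.col y = 1) : σ.col x = 1 := by
  rcases eq_or_lt_of_le hxy with rfl | hlt
  · exact hy
  · have h := col_anti σ h1 h2 x y hlt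
    rw [hy] at h
    have h2' := (σ.col x).isLt
    rw [Fin.le_def] at h
    refine Fin.ext ?_
    simp only [Fin.val_one] at h ⊢
    omega

lemma col_eq_one_iff (σ : CPart n 2) (h1 : ¬ Has112 σ) (h2 : ¬ Has1122 σ) (x : Fin n) :
    σ.col x = 1 ↔ (x : ℕ) < tcard σ := by
  constructor
  · intro hx
    have hsub : Finset.Iic x ⊆ Finset.univ.filter fun y => σ.col y = 1 := by
      intro y hy
      rw [Finset.mem_Iic] at hy
      simp only [Finset.mem_filter, Finset.mem_univ, true_and]
      exact col_down σ h1 h2 hy hx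
    have := Finset.card_le_card hsub
    rw [Fin.card_Iic] at this
    unfold tcard
    omega
  · intro hx
    by_contra hcx
    have hsub : (Finset.univ.filter fun y => σ.col y = 1) ⊆ Finset.Iio x := by
      intro y hy
      simp only [Finset.mem_filter, Finset.mem_univ, true_and] at hy
      rw [Finset.mem_Iio]
      by_contra hyx
      push_neg at hyx
      exact hcx (col_down σ h1 h2 hyx hy)
    have := Finset.card_le_card hsub
    rw [Fin.card_Iio] at this
    unfold tcard at hx
    omega

lemma col_eq_zero (σ : CPart n 2) {x : Fin n} (hx : σ.col x ≠ 1) : σ.col x = 0 := by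
  have h2 := (σ.col x).isLt
  have h1 : (σ.col x : ℕ) ≠ 1 := fun h => hx (Fin.ext (by simpa using h))
  exact Fin.ext (by simp only [Fin.val_zero]; omega)

lemma card_lt_threshold {i : ℕ} (h : i ≤ n) :
    (Finset.univ.filter fun x : Fin n => (x : ℕ) < i).card = i := by
  have himg : (Finset.univ.filter fun x : Fin n => (x : ℕ) < i) =
      (Finset.univ : Finset (Fin i)).image (Fin.castLE h) := by
    ext x
    simp only [Finset.mem_filter, Finset.mem_univ, true_and, Finset.mem_image]
    constructor
    · intro hx
      exact ⟨⟨(x : ℕ), hx⟩, Fin.ext rfl⟩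
    · rintro ⟨a, rfl⟩
      exact a.isLt
  rw [himg, Finset.card_image_of_injective _ (Fin.castLE_injective h), Finset.card_univ,
    Fintype.card_fin]

lemma sigma_subtype_ext {ι T : Type*} {p : ι → T → Prop} {a b : ι}
    {x : {t // p a t}} {y : {t // p b t}} (h : a = b) (h2 : (x : T) = (y : T)) :
    (⟨a, x⟩ : Σ i, {t // p i t}) = ⟨b, y⟩ := by
  subst h
  exact congrArg (Sigma.mk a) (Subtype.ext h2)

/-- The central bijection. -/
def avoidEquiv (n : ℕ) :
    {σ : CPart n 2 // ¬ Has112 σ ∧ ¬ Has1122 σ ∧ ¬ Has121 σ} ≃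
      Σ i : Fin (n + 1), {P : Finpartition (Finset.univ : Finset (Fin n)) // SplitAt (i : ℕ) P} where
  toFun σ := ⟨⟨tcard σ.1, by have := tcard_le σ.1; omega⟩, σ.1.part, by
    intro x y hx hy hb
    obtain ⟨h1, h2, h3⟩ := σ.2
    have hx' : (x : ℕ) < tcard σ.1 := hx
    have hy' : tcard σ.1 ≤ (y : ℕ) := hy
    have hcx : σ.1.col x = 1 := (col_eq_one_iff σ.1 h1 h2 x).mpr hx'
    have hcy : σ.1.col y = 0 := col_eq_zero σ.1 (fun hc => by
      have := (col_eq_one_iff σ.1 h1 h2 y).mp hc; omega)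
    have hxy : x < y := by rw [Fin.lt_def]; omega
    exact h3 ⟨x, y, hxy, hb, by rw [hcx, hcy]; decide⟩⟩
  invFun t := ⟨⟨t.2.1, fun x => if (x : ℕ) < (t.1 : ℕ) then 1 else 0⟩, by
    obtain ⟨i, P, hP⟩ := t
    refine ⟨?_, ?_, ?_⟩
    · rintro ⟨x, y, hxy, _, hc⟩
      simp only at hc
      rw [Fin.lt_def] at hxy
      by_cases hx : (x : ℕ) < (i : ℕ) <;> by_cases hy : (y : ℕ) < (i : ℕ) <;>
        simp only [hx, hy, if_true, if_false, if_pos, if_neg, not_false_iff] at hc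
      · exact absurd hc (lt_irrefl _)
      · exact absurd hc (by decide)
      · omega
      · exact absurd hc (lt_irrefl _)
    · rintro ⟨x, y, hxy, _, hc⟩
      simp only at hc
      rw [Fin.lt_def] at hxy
      by_cases hx : (x : ℕ) < (i : ℕ) <;> by_cases hy : (y : ℕ) < (i : ℕ) <;>
        simp only [hx, hy, if_true, if_false, if_pos, if_neg, not_false_iff] at hc
      · exact absurd hc (lt_irrefl _)
      · exact absurd hc (by decide)
      · omega
      · exact absurd hc (lt_irrefl _)
    · rintro ⟨x, y, hxy, hb, hc⟩
      simp only at hc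
      by_cases hx : (x : ℕ) < (i : ℕ) <;> by_cases hy : (y : ℕ) < (i : ℕ) <;>
        simp only [hx, hy, if_true, if_false, if_pos, if_neg, not_false_iff] at hc
      · exact absurd hc (lt_irrefl _)
      · exact hP x y hx (le_of_not_gt hy) hb
      · exact absurd hc (by decide)
      · exact absurd hc (lt_irrefl _)⟩
  left_inv := by
    rintro ⟨⟨P, c⟩, hA⟩
    obtain ⟨h1, h2, h3⟩ := hA
    refine Subtype.ext ?_
    show CPart.mk P _ = CPart.mk P c
    congr 1
    funext x
    by_cases hx : (x : ℕ) < tcard ⟨P, c⟩ <;> simp only [hx, if_true, if_false, if_pos, if_neg,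
      not_false_iff]
    · exact ((col_eq_one_iff ⟨P, c⟩ h1 h2 x).mpr hx).symm
    · exact (col_eq_zero ⟨P, c⟩ (fun hc => hx ((col_eq_one_iff ⟨P, c⟩ h1 h2 x).mp hc))).symm
  right_inv := by
    rintro ⟨⟨iv, hiv⟩, P, hP⟩
    have hfe : (Finset.univ.filter fun x : Fin n =>
        (if (x : ℕ) < iv then (1 : Fin 2) else 0) = 1) =
        Finset.univ.filter fun x : Fin n => (x : ℕ) < iv := by
      apply Finset.filter_congr
      intro x _
      by_cases hx : (x : ℕ) < iv <;> simp [hx]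
    have ht : tcard ⟨P, fun x => if (x : ℕ) < iv then 1 else 0⟩ = iv := by
      unfold tcard
      rw [hfe, card_lt_threshold (by omega : iv ≤ n)]
    refine sigma_subtype_ext (p := fun (i : Fin (n + 1)) P => SplitAt (i : ℕ) P) ?_ ?_
    · exact Fin.ext ht
    · rfl

end main

theorem stmt13 : ∀ n : ℕ, 1 ≤ n →
    Nat.card {σ : CPart n 2 // ¬ Has112 σ ∧ ¬ Has1122 σ ∧ ¬ Has121 σ} =
      ∑ i ∈ Finset.range (n + 1), bell i * bell (n - i) := by
  intro n _
  rw [Nat.card_congr (avoidEquiv n)]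
  classical
  letI : Fintype (Finpartition (Finset.univ : Finset (Fin n))) := Fintype.ofFinite _
  have hsig : Nat.card (Σ i : Fin (n + 1),
      {P : Finpartition (Finset.univ : Finset (Fin n)) // SplitAt (i : ℕ) P}) =
      ∑ i : Fin (n + 1), Nat.card
        {P : Finpartition (Finset.univ : Finset (Fin n)) // SplitAt (i : ℕ) P} := by
    rw [Nat.card_eq_fintype_card, Fintype.card_sigma]
    exact Finset.sum_congr rfl fun i _ => (Nat.card_eq_fintype_card).symm
  rw [hsig]
  rw [← Fin.sum_univ_eq_sum_range (fun i => bell i * bell (n - i)) (n + 1)]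
  refine Finset.sum_congr rfl fun i _ => ?_
  exact card_splitAt (by omega : (i : ℕ) ≤ n)
end

section
/- For n ≥ 1, the number of 2-colored set partitions of [n] avoiding the four patterns 1^1 1^1, 1^1 1^2, 1^2 1^1, and 1^1 2^2 in the pattern sense equals n + 1. -/
lemma aux_sameBlock_bot {n : ℕ} (i j : Fin n) :
    SameBlock (⊥ : Finpartition (Finset.univ : Finset (Fin n))) i j ↔ i = j := by
  constructor
  · rintro ⟨b, hb, hi, hj⟩
    obtain ⟨a, -, rfl⟩ := Finpartition.mem_bot_iff.1 hb
    simp_all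
  · rintro rfl
    exact ⟨{i}, Finpartition.mem_bot_iff.2 ⟨i, Finset.mem_univ i, rfl⟩, by simp, by simp⟩

lemma aux_bot_of_avoid {n k : ℕ} (σ : CPart n k) (h11 : ¬ Has11 σ) (h112 : ¬ Has112 σ)
    (h121 : ¬ Has121 σ) : σ.part = ⊥ := by
  refine le_antisymm ?_ bot_le
  intro b hb
  obtain ⟨a, ha⟩ := σ.part.nonempty_of_mem_parts hb
  refine ⟨{a}, Finpartition.mem_bot_iff.2 ⟨a, Finset.mem_univ a, rfl⟩, ?_⟩
  intro x hx
  rcases eq_or_ne x a with rfl | hxa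
  · exact Finset.mem_singleton_self x
  exfalso
  rcases hxa.lt_or_gt with hlt | hlt
  · rcases lt_trichotomy (σ.col x) (σ.col a) with hc | hc | hc
    · exact h112 ⟨x, a, hlt, ⟨b, hb, hx, ha⟩, hc⟩
    · exact h11 ⟨x, a, hlt, ⟨b, hb, hx, ha⟩, hc⟩
    · exact h121 ⟨x, a, hlt, ⟨b, hb, hx, ha⟩, hc⟩
  · rcases lt_trichotomy (σ.col a) (σ.col x) with hc | hc | hc
    · exact h112 ⟨a, x, hlt, ⟨b, hb, ha, hx⟩, hc⟩
    · exact h11 ⟨a, x, hlt, ⟨b, hb, ha, hx⟩, hc⟩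
    · exact h121 ⟨a, x, hlt, ⟨b, hb, ha, hx⟩, hc⟩

lemma aux_card_filter_lt {n m : ℕ} (hm : m ≤ n) :
    ((Finset.univ : Finset (Fin n)).filter (fun j : Fin n => (j : ℕ) < m)).card = m := by
  conv_rhs => rw [← Finset.card_range m]
  refine Finset.card_bij (fun a _ => (a : ℕ)) ?_ ?_ ?_
  · intro a ha; simpa using (Finset.mem_filter.1 ha).2
  · intro a ha b hb hab; exact Fin.ext hab
  · intro b hb
    rw [Finset.mem_range] at hb
    exact ⟨⟨b, hb.trans_le hm⟩, Finset.mem_filter.2 ⟨Finset.mem_univ _, hb⟩, rfl⟩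

lemma aux_col_char {n : ℕ} (σ : CPart n 2) (hbot : σ.part = ⊥) (h1122 : ¬ Has1122 σ)
    (i : Fin n) : σ.col i = 1 ↔
    (i : ℕ) < ((Finset.univ : Finset (Fin n)).filter (fun j => σ.col j = 1)).card := by
  set S := (Finset.univ : Finset (Fin n)).filter (fun j => σ.col j = 1) with hS
  have hdown : ∀ a b : Fin n, a ≤ b → σ.col b = 1 → σ.col a = 1 := by
    intro a b hab hcb
    rcases eq_or_lt_of_le hab with rfl | hlt
    · exact hcb
    by_contra hne
    have hlt' : σ.col a < σ.col b := by
      have h1 := (σ.col a).isLt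
      have h2 : (σ.col a : ℕ) ≠ 1 := by simpa [Fin.ext_iff] using hne
      have h3 : (σ.col b : ℕ) = 1 := by rw [hcb]; rfl
      rw [Fin.lt_def]; omega
    exact h1122 ⟨a, b, hlt, by rw [hbot]; rw [aux_sameBlock_bot]; exact hlt.ne, hlt'⟩
  constructor
  · intro hci
    have hsub : ((Finset.univ : Finset (Fin n)).filter (fun j => j ≤ i)) ⊆ S := by
      intro j hj
      simp only [hS, Finset.mem_filter, Finset.mem_univ, true_and] at hj ⊢
      exact hdown j i hj hci
    have hcard : ((Finset.univ : Finset (Fin n)).filter (fun j => j ≤ i)).card = (i : ℕ) + 1 := by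
      have heq : ((Finset.univ : Finset (Fin n)).filter (fun j => j ≤ i)) =
          (Finset.univ : Finset (Fin n)).filter (fun j : Fin n => (j : ℕ) < (i : ℕ) + 1) := by
        apply Finset.filter_congr; intro j _
        rw [Fin.le_def, Nat.lt_succ_iff]
      rw [heq, aux_card_filter_lt i.isLt]
    have := Finset.card_le_card hsub
    omega
  · intro hlt
    by_contra hne
    have hsub : S ⊆ (Finset.univ : Finset (Fin n)).filter (fun j : Fin n => (j : ℕ) < (i : ℕ)) := by
      intro j hj
      simp only [hS, Finset.mem_filter, Finset.mem_univ, true_and] at hj ⊢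
      by_contra hji
      exact hne (hdown i j (by rw [Fin.le_def]; omega) hj)
    have h1 := Finset.card_le_card hsub
    rw [aux_card_filter_lt i.isLt.le] at h1
    omega

theorem stmt15 : ∀ n : ℕ, 1 ≤ n →
    Nat.card {σ : CPart n 2 // ¬ Has11 σ ∧ ¬ Has112 σ ∧ ¬ Has121 σ ∧ ¬ Has1122 σ} = n + 1 := by
  intro n _
  have key : Nat.card {σ : CPart n 2 // ¬ Has11 σ ∧ ¬ Has112 σ ∧ ¬ Has121 σ ∧ ¬ Has1122 σ}
      = Nat.card (Fin (n+1)) := by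
    refine Nat.card_congr (Equiv.ofBijective (fun σ =>
      (⟨((Finset.univ : Finset (Fin n)).filter (fun i : Fin n => σ.1.col i = 1)).card,
        Nat.lt_succ_of_le ((Finset.card_filter_le _ _).trans_eq (by simp))⟩ : Fin (n+1)))
      ⟨?_, ?_⟩)
    · rintro ⟨σ, hσ11, hσ112, hσ121, hσ1122⟩ ⟨τ, hτ11, hτ112, hτ121, hτ1122⟩ h
      have hcount : ((Finset.univ : Finset (Fin n)).filter (fun i => σ.col i = 1)).card =
          ((Finset.univ : Finset (Fin n)).filter (fun i => τ.col i = 1)).card := by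
        simpa using congrArg Fin.val h
      have hPσ := aux_bot_of_avoid σ hσ11 hσ112 hσ121
      have hPτ := aux_bot_of_avoid τ hτ11 hτ112 hτ121
      have hcol : σ.col = τ.col := by
        funext i
        have h1 := aux_col_char σ hPσ hσ1122 i
        have h2 := aux_col_char τ hPτ hτ1122 i
        rw [hcount] at h1
        by_cases hc : σ.col i = 1
        · rw [hc, (h2.2 (h1.1 hc)).symm]
        · have hc' : ¬ τ.col i = 1 := fun h => hc (h1.2 (h2.1 h))
          have e1 := (σ.col i).isLt
          have e2 := (τ.col i).isLt
          have e3 : (σ.col i : ℕ) ≠ 1 := by simpa [Fin.ext_iff] using hc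
          have e4 : (τ.col i : ℕ) ≠ 1 := by simpa [Fin.ext_iff] using hc'
          apply Fin.ext; omega
      ext1
      · cases σ; cases τ; simp_all
    · intro k
      set σ : CPart n 2 := ⟨⊥, fun i => if (i : ℕ) < (k : ℕ) then 1 else 0⟩ with hσ
      have hnoSB : ∀ i j : Fin n, i < j → ¬ SameBlock σ.part i j := by
        intro i j hij hsb
        rw [hσ, aux_sameBlock_bot] at hsb
        exact hij.ne hsb
      have havoid : ¬ Has11 σ ∧ ¬ Has112 σ ∧ ¬ Has121 σ ∧ ¬ Has1122 σ := by
        refine ⟨?_, ?_, ?_, ?_⟩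
        · rintro ⟨i, j, hij, hsb, -⟩; exact hnoSB i j hij hsb
        · rintro ⟨i, j, hij, hsb, -⟩; exact hnoSB i j hij hsb
        · rintro ⟨i, j, hij, hsb, -⟩; exact hnoSB i j hij hsb
        · rintro ⟨i, j, hij, -, hc⟩
          rw [hσ] at hc
          simp only at hc
          rw [Fin.lt_def] at hij hc
          by_cases h1 : (i : ℕ) < (k : ℕ) <;> by_cases h2 : (j : ℕ) < (k : ℕ) <;>
            simp [h1, h2] at hc <;> omega
      refine ⟨⟨σ, havoid⟩, ?_⟩
      apply Fin.ext
      simp only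
      have : ((Finset.univ : Finset (Fin n)).filter (fun i : Fin n => σ.col i = 1)) =
          ((Finset.univ : Finset (Fin n)).filter (fun i : Fin n => (i : ℕ) < (k : ℕ))) := by
        apply Finset.filter_congr; intro j _
        rw [hσ]
        simp only
        by_cases h1 : (j : ℕ) < (k : ℕ) <;> simp [h1]
      rw [this, aux_card_filter_lt (Nat.lt_succ_iff.1 k.isLt)]
  rw [key, Nat.card_eq_fintype_card, Fintype.card_fin]
end
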